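/- arXiv:1207.3684 — 5 statements merged into one kernel-verified Lean document; each statement's English description precedes it below -/
import Mathlib

section
/- Let R be a commutative ring with 1, let M be a free R-module of rank n ≥ 1, let r ≥ 1, and let f : M → M be an R-linear endomorphism. Then the induced R-linear endomorphism Sym^r(f) of the r-th symmetric power Sym^r M satisfies det(Sym^r(f)) = (det f)^{(n+r-1)!/(n!·(r-1)!)}. -/
open scoped TensorProduct

/-- The submodule of relations defining the symmetric power: differences of pure tensors
related by a permutation of the factors. -/
def symRel (R : Type*) [CommRing R] (n : ℕ) (M : Type*) [AddCommGroup M] [Module R M] :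
    Submodule R (⨂[R]^n M) :=
  Submodule.span R {x | ∃ (σ : Equiv.Perm (Fin n)) (v : Fin n → M),
    x = PiTensorProduct.tprod R v - PiTensorProduct.tprod R (v ∘ σ)}

/-- The `n`-th symmetric power of the `R`-module `M`: the quotient of the `n`-fold tensor
power by the permutation action of the symmetric group. -/
def SymPow (R : Type*) [CommRing R] (n : ℕ) (M : Type*) [AddCommGroup M] [Module R M] :=
  (⨂[R]^n M) ⧸ symRel R n M

noncomputable instance (R : Type*) [CommRing R] (n : ℕ) (M : Type*) [AddCommGroup M] [Module R M] :
    AddCommGroup (SymPow R n M) :=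
  inferInstanceAs (AddCommGroup ((⨂[R]^n M) ⧸ symRel R n M))

noncomputable instance (R : Type*) [CommRing R] (n : ℕ) (M : Type*) [AddCommGroup M] [Module R M] :
    Module R (SymPow R n M) :=
  inferInstanceAs (Module R ((⨂[R]^n M) ⧸ symRel R n M))

/-- The canonical quotient map from the tensor power to the symmetric power. -/
noncomputable def SymPow.mk (R : Type*) [CommRing R] (n : ℕ) (M : Type*) [AddCommGroup M] [Module R M] :
    (⨂[R]^n M) →ₗ[R] SymPow R n M :=
  (symRel R n M).mkQ

/-- The product `v 0 · v 1 · ⋯ · v (n-1)` in the symmetric power `SymPow R n M`. -/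
noncomputable def SymPow.prod (R : Type*) [CommRing R] {n : ℕ} {M : Type*} [AddCommGroup M] [Module R M]
    (v : Fin n → M) : SymPow R n M :=
  SymPow.mk R n M (PiTensorProduct.tprod R v)

/-- The wedge `v 0 ∧ v 1 ∧ ⋯ ∧ v (n-1)`, as an element of the `n`-th exterior power
`⋀[R]^n M`. -/
noncomputable def wedgeMk (R : Type*) [CommRing R] {n : ℕ} {M : Type*} [AddCommGroup M] [Module R M]
    (v : Fin n → M) : ⋀[R]^n M :=
  ⟨ExteriorAlgebra.ιMulti R n v, ExteriorAlgebra.ιMulti_range R n (Set.mem_range_self v)⟩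

/-- Functoriality of the symmetric power. -/
noncomputable def SymPow.map (R : Type*) [CommRing R] {n : ℕ} {M N : Type*}
    [AddCommGroup M] [Module R M] [AddCommGroup N] [Module R N] (f : M →ₗ[R] N) :
    SymPow R n M →ₗ[R] SymPow R n N :=
  Submodule.mapQ (symRel R n M) (symRel R n N) (PiTensorProduct.map fun _ => f) (by
    rw [symRel, Submodule.span_le]
    rintro x ⟨σ, v, rfl⟩
    simp only [SetLike.mem_coe, Submodule.mem_comap, map_sub, PiTensorProduct.map_tprod]
    exact Submodule.subset_span ⟨σ, fun i => f (v i), rfl⟩)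

/-!
In the basis of `Sym^r M` formed by the monomials `b i₁ ⋯ b iᵣ`, indexed by multisets of size
`r`, the matrix of `Sym^r f` is a polynomial expression `A.symPow r` in the matrix `A` of `f`,
multiplicative in `A`. If `A` is triangular for some weight on the indices (as diagonal matrices
and transvections are), then `A.symPow r` is triangular for the summed weight, with diagonal
entries `∏ i, A i i ^ count i m`; as every index occurs `C(n+r-1, r-1)` times in total among the
multisets, `det (A.symPow r) = (det A) ^ C(n+r-1, r-1)`. Over a field every matrix is a product
of such matrices, and the general case follows by specialising the generic matrix over
`ℤ[Xᵢⱼ]`, which embeds into a field.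
-/

open Finset

namespace Sym

variable {α : Type*} {r : ℕ}

def ofFn (u : Fin r → α) : Sym α r :=
  ⟨List.ofFn u, by simp⟩

-- An arbitrary enumeration of `m`, characterised by `ofFn_toFn`.
noncomputable def toFn (m : Sym α r) : Fin r → α :=
  fun k => (m : Multiset α).toList.get (k.cast (by simp))

theorem coe_ofFn (u : Fin r → α) : (ofFn u : Multiset α) = List.ofFn u := rfl

@[simp]
theorem ofFn_toFn (m : Sym α r) : ofFn m.toFn = m := by
  apply Sym.ext
  rw [coe_ofFn, ← Multiset.coe_toList (m : Multiset α)]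
  congr 1
  refine List.ext_getElem (by simp) fun i h₁ h₂ => ?_
  simp [toFn]

@[simp]
theorem ofFn_comp_perm (u : Fin r → α) (σ : Equiv.Perm (Fin r)) : ofFn (u ∘ σ) = ofFn u :=
  Sym.ext <| Multiset.coe_eq_coe.2 (σ.ofFn_comp_perm u)

theorem exists_perm_of_ofFn_eq {u v : Fin r → α} (h : ofFn u = ofFn v) :
    ∃ σ : Equiv.Perm (Fin r), v = u ∘ σ := by
  -- Sort both tuples, for an arbitrary linear order on `α`.
  let : LinearOrder α := IsWellOrder.linearOrder WellOrderingRel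
  have hperm : ofFn (u ∘ Tuple.sort u) = ofFn (v ∘ Tuple.sort v) := by
    rw [ofFn_comp_perm, ofFn_comp_perm, h]
  have hsort : u ∘ Tuple.sort u = v ∘ Tuple.sort v :=
    List.ofFn_injective <| (Multiset.coe_eq_coe.1 (congrArg Sym.toMultiset hperm)).eq_of_pairwise'
      (Tuple.monotone_sort u).sortedLE_ofFn.pairwise (Tuple.monotone_sort v).sortedLE_ofFn.pairwise
  refine ⟨(Tuple.sort v).symm.trans (Tuple.sort u), funext fun k => ?_⟩
  simpa using (congrFun hsort ((Tuple.sort v).symm k)).symm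

@[to_additive]
theorem prod_map_ofFn {M : Type*} [CommMonoid M] (g : α → M) (u : Fin r → α) :
    ((ofFn u : Multiset α).map g).prod = ∏ k, g (u k) := by
  simp [coe_ofFn, List.prod_ofFn]

@[to_additive]
theorem prod_comp_toFn {M : Type*} [CommMonoid M] (g : α → M) (m : Sym α r) :
    ∏ k, g (m.toFn k) = ((m : Multiset α).map g).prod := by
  rw [← prod_map_ofFn, ofFn_toFn]

theorem prod_comp_toFn_eq_prod_pow_count [Fintype α] [DecidableEq α] {M : Type*}
    [CommMonoid M] (g : α → M) (m : Sym α r) :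
    ∏ k, g (m.toFn k) = ∏ a, g a ^ (m : Multiset α).count a := by
  rw [prod_comp_toFn, prod_multiset_map_count]
  exact prod_subset (subset_univ _) fun a _ ha => by
    rw [Multiset.count_eq_zero_of_notMem (by simpa using ha), pow_zero]

theorem sum_count_eq_sum_count [Fintype α] [DecidableEq α] (a a' : α) :
    ∑ m : Sym α r, (m : Multiset α).count a = ∑ m : Sym α r, (m : Multiset α).count a' := by
  refine Fintype.sum_equiv (Sym.equivCongr (Equiv.swap a a')) _ _ fun m => ?_
  simp only [Sym.equivCongr_apply, Sym.coe_map]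
  rw [← Multiset.count_map_eq_count' _ _ (Equiv.swap a a').injective a, Equiv.swap_apply_left]

theorem sum_count_eq_choose [Fintype α] [DecidableEq α] (hr : 1 ≤ r) (a : α) :
    ∑ m : Sym α r, (m : Multiset α).count a = (Fintype.card α + r - 1).choose (r - 1) := by
  -- By symmetry all `a` have the same total count, and these add up to `r · #(Sym α r)`.
  have hcard : 0 < Fintype.card α := Fintype.card_pos_iff.2 ⟨a⟩
  refine Nat.eq_of_mul_eq_mul_left hcard ?_
  calc Fintype.card α * ∑ m : Sym α r, (m : Multiset α).count a
      = ∑ a' : α, ∑ m : Sym α r, (m : Multiset α).count a' := by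
        simp [sum_count_eq_sum_count _ a]
    _ = (Fintype.card α + r - 1).choose r * r := by
        rw [sum_comm]
        simp [Multiset.sum_count_eq_card, Sym.card_sym_eq_choose]
    _ = Fintype.card α * (Fintype.card α + r - 1).choose (r - 1) := by
        obtain ⟨s, rfl⟩ := Nat.exists_eq_add_of_le' hr
        rw [Nat.add_sub_cancel, Nat.choose_succ_right_eq, mul_comm]
        congr 1
        omega

end Sym

namespace Matrix

variable {ι S : Type*} [CommRing S]

def IsTriangularBy (ρ : ι → ℕ) (A : Matrix ι ι S) : Prop :=
  ∀ ⦃a c⦄, a ≠ c → A a c ≠ 0 → ρ a < ρ c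

namespace IsTriangularBy

variable {ρ : ι → ℕ} {A : Matrix ι ι S}

theorem sum_lt_of_prod_ne_zero (hA : A.IsTriangularBy ρ) {κ : Type*} [Fintype κ]
    {u v : κ → ι} (hprod : ∏ k, A (u k) (v k) ≠ 0) (huv : u ≠ v) :
    ∑ k, ρ (u k) < ∑ k, ρ (v k) := by
  have hne : ∀ k, A (u k) (v k) ≠ 0 := fun k h => hprod (prod_eq_zero (mem_univ k) h)
  obtain ⟨k, hk⟩ := Function.ne_iff.1 huv
  refine sum_lt_sum (fun l _ => ?_) ⟨k, mem_univ k, hA hk (hne k)⟩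
  by_cases hl : u l = v l
  · rw [hl]
  · exact (hA hl (hne l)).le

theorem det_eq_prod_diag [Fintype ι] [DecidableEq ι] (hA : A.IsTriangularBy ρ) :
    A.det = ∏ a, A a a := by
  rw [det_apply, sum_eq_single (1 : Equiv.Perm ι) (fun σ _ hσ => ?_) (by simp)]
  · simp
  · suffices ∏ a, A (σ a) a = 0 by rw [this, smul_zero]
    by_contra hprod
    have := hA.sum_lt_of_prod_ne_zero hprod (u := σ) (v := id)
      (by rwa [Ne, ← Equiv.Perm.coe_one, DFunLike.coe_fn_eq])
    simp [Equiv.sum_comp σ ρ] at this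

end IsTriangularBy

theorem isTriangularBy_diagonal [DecidableEq ι] (ρ : ι → ℕ) (d : ι → S) :
    (diagonal d).IsTriangularBy ρ :=
  fun _ _ hac h => absurd (diagonal_apply_ne d hac) h

theorem isTriangularBy_transvection [DecidableEq ι] {i j : ι} (hij : i ≠ j) (c : S) :
    (transvection i j c).IsTriangularBy (Pi.single j 1) := by
  intro a b hab h
  obtain ⟨rfl, rfl⟩ : i = a ∧ j = b := by
    by_contra hc
    simp [transvection, one_apply_ne hab, hc] at h
  simp [hij]

noncomputable def symPow [Fintype ι] [DecidableEq ι] (r : ℕ) (A : Matrix ι ι S) :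
    Matrix (Sym ι r) (Sym ι r) S :=
  of fun m m' => ∑ u : Fin r → ι with Sym.ofFn u = m, ∏ k, A (u k) (m'.toFn k)

theorem symPow_map [Fintype ι] [DecidableEq ι] {r : ℕ} {T : Type*} [CommRing T] (f : S →+* T)
    (A : Matrix ι ι S) :
    (A.symPow r).map f = (A.map f).symPow r := by
  ext m m'
  simp [symPow, map_sum, map_prod]

end Matrix

namespace SymPow

variable {R : Type*} [CommRing R] {r : ℕ} {M N : Type*} [AddCommGroup M] [Module R M]
  [AddCommGroup N] [Module R N]

@[simp]
theorem prod_comp_perm (v : Fin r → M) (σ : Equiv.Perm (Fin r)) :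
    SymPow.prod R (v ∘ σ) = SymPow.prod R v :=
  ((Submodule.Quotient.eq (symRel R r M)).2 (Submodule.subset_span ⟨σ, v, rfl⟩)).symm

theorem prod_comp_eq_of_ofFn_eq {ι : Type*} (v : ι → M) {u u' : Fin r → ι}
    (h : Sym.ofFn u = Sym.ofFn u') : SymPow.prod R (v ∘ u) = SymPow.prod R (v ∘ u') := by
  obtain ⟨σ, rfl⟩ := Sym.exists_perm_of_ofFn_eq h
  exact (prod_comp_perm (v ∘ u) σ).symm

@[simp]
theorem map_prod (f : M →ₗ[R] N) (v : Fin r → M) :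
    SymPow.map R f (SymPow.prod R v) = SymPow.prod R (f ∘ v) := by
  change SymPow.mk R r N (PiTensorProduct.map (fun _ => f) (PiTensorProduct.tprod R v)) = _
  rw [PiTensorProduct.map_tprod]
  rfl

theorem linearMap_ext {ι : Type*} (b : Module.Basis ι R M) {F G : SymPow R r M →ₗ[R] N}
    (h : ∀ u : Fin r → ι, F (SymPow.prod R (b ∘ u)) = G (SymPow.prod R (b ∘ u))) : F = G :=
  Submodule.linearMap_qext _ <| PiTensorProduct.ext <|
    Module.Basis.ext_multilinear (fun _ => b) h

theorem map_comp (f g : M →ₗ[R] M) :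
    SymPow.map R (n := r) (f ∘ₗ g) = SymPow.map R f ∘ₗ SymPow.map R g :=
  Submodule.linearMap_qext _ <| PiTensorProduct.ext <| MultilinearMap.ext fun v => by
    change SymPow.map R _ (SymPow.prod R v) = SymPow.map R _ (SymPow.map R _ (SymPow.prod R v))
    simp only [map_prod]
    rfl

variable {ι : Type*} (b : Module.Basis ι R M)

noncomputable def tensorCoord : (⨂[R]^r M) →ₗ[R] (Sym ι r →₀ R) :=
  Finsupp.lmapDomain R R Sym.ofFn ∘ₗ (Basis.piTensorProduct fun _ => b).repr.toLinearMap

theorem tensorCoord_tprod_basis (u : Fin r → ι) :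
    tensorCoord b (PiTensorProduct.tprod R (b ∘ u)) = Finsupp.single (Sym.ofFn u) 1 := by
  have : PiTensorProduct.tprod R (b ∘ u) = Basis.piTensorProduct (fun _ => b) u :=
    (Basis.piTensorProduct_apply _ u).symm
  simp only [tensorCoord, LinearMap.coe_comp, Function.comp_apply, LinearEquiv.coe_coe, this,
    Module.Basis.repr_self, Finsupp.lmapDomain_apply, Finsupp.mapDomain_single]

theorem symRel_le_ker_tensorCoord : symRel R r M ≤ LinearMap.ker (tensorCoord b) := by
  rw [symRel, Submodule.span_le]
  rintro _ ⟨σ, v, rfl⟩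
  rw [SetLike.mem_coe, LinearMap.mem_ker, map_sub, sub_eq_zero]
  have : (tensorCoord (r := r) b).compMultilinearMap (PiTensorProduct.tprod R) =
      ((tensorCoord (r := r) b).compMultilinearMap (PiTensorProduct.tprod R)).domDomCongr σ :=
    Module.Basis.ext_multilinear (fun _ => b) fun u => by
      change tensorCoord b (PiTensorProduct.tprod R (b ∘ u)) =
        tensorCoord b (PiTensorProduct.tprod R (b ∘ (u ∘ σ)))
      rw [tensorCoord_tprod_basis, tensorCoord_tprod_basis, Sym.ofFn_comp_perm]
  exact congr($this v)

noncomputable def coord : SymPow R r M →ₗ[R] (Sym ι r →₀ R) :=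
  (symRel R r M).liftQ (tensorCoord b) (symRel_le_ker_tensorCoord b)

theorem coord_prod_basis (u : Fin r → ι) :
    coord b (SymPow.prod R (b ∘ u)) = Finsupp.single (Sym.ofFn u) 1 :=
  tensorCoord_tprod_basis b u

theorem coord_prod_apply [Fintype ι] [DecidableEq ι] (v : Fin r → M) (m : Sym ι r) :
    coord b (SymPow.prod R v) m =
      ∑ u : Fin r → ι with Sym.ofFn u = m, ∏ k, b.repr (v k) (u k) := by
  change tensorCoord b (PiTensorProduct.tprod R v) m = _
  simp [tensorCoord, Finsupp.mapDomain, Finsupp.sum_fintype, Finsupp.finsetSum_apply,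
    Finsupp.single_apply, sum_filter]

noncomputable def basis : Module.Basis (Sym ι r) R (SymPow R r M) :=
  .ofRepr <| .ofLinearMap (coord b)
    (Finsupp.linearCombination R fun m => SymPow.prod R (b ∘ m.toFn))
    (Finsupp.lhom_ext fun m c => by simp [coord_prod_basis])
    (linearMap_ext b fun u => by
      simp [coord_prod_basis, prod_comp_eq_of_ofFn_eq b (Sym.ofFn_toFn (Sym.ofFn u))])

theorem basis_apply (m : Sym ι r) : basis b m = SymPow.prod R (b ∘ m.toFn) := by
  simp [basis]

theorem basis_repr_apply (x : SymPow R r M) : (basis b).repr x = coord b x := rfl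

theorem toMatrix_map [Fintype ι] [DecidableEq ι] (f : M →ₗ[R] M) :
    LinearMap.toMatrix (basis b) (basis b) (SymPow.map R (n := r) f) =
      (LinearMap.toMatrix b b f).symPow r := by
  ext m m'
  simp [LinearMap.toMatrix_apply, basis_apply, basis_repr_apply, coord_prod_apply, Matrix.symPow]


end SymPow

namespace Matrix

variable {ι S : Type*} [Fintype ι] [DecidableEq ι] [CommRing S] {r : ℕ}

theorem symPow_mul (A B : Matrix ι ι S) : (A * B).symPow r = A.symPow r * B.symPow r := by
  let e := Pi.basisFun S ι
  have h (C : Matrix ι ι S) : C.symPow r =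
      LinearMap.toMatrix (SymPow.basis e) (SymPow.basis e) (SymPow.map S (toLin e e C)) := by
    rw [SymPow.toMatrix_map, LinearMap.toMatrix_toLin]
  rw [h, h, h, toLin_mul e e e, SymPow.map_comp, LinearMap.toMatrix_comp _ (SymPow.basis e)]


namespace IsTriangularBy

variable {ρ : ι → ℕ} {A : Matrix ι ι S}

theorem symPow (hA : A.IsTriangularBy ρ) :
    (A.symPow r).IsTriangularBy fun m : Sym ι r => ((m : Multiset ι).map ρ).sum := by
  intro m m' hmm' hentry
  obtain ⟨u, hu, hprod⟩ := exists_ne_zero_of_sum_ne_zero hentry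
  rw [mem_filter_univ] at hu
  have huv : u ≠ m'.toFn := by
    rintro rfl
    exact hmm' (hu.symm.trans m'.ofFn_toFn)
  simpa only [← hu, Sym.sum_map_ofFn, Sym.sum_comp_toFn] using
    hA.sum_lt_of_prod_ne_zero hprod huv

theorem symPow_apply_self (hA : A.IsTriangularBy ρ) (m : Sym ι r) :
    A.symPow r m m = ∏ k, A (m.toFn k) (m.toFn k) := by
  refine sum_eq_single_of_mem _ ((mem_filter_univ _).2 m.ofFn_toFn) fun u hu hne => ?_
  rw [mem_filter_univ] at hu
  by_contra hprod
  have := hA.sum_lt_of_prod_ne_zero hprod hne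
  rw [← Sym.sum_map_ofFn, hu, Sym.sum_comp_toFn] at this
  exact this.false

theorem det_symPow (hA : A.IsTriangularBy ρ) (hr : 1 ≤ r) :
    (A.symPow r).det = A.det ^ (Fintype.card ι + r - 1).choose (r - 1) :=
  calc (A.symPow r).det
      = ∏ m : Sym ι r, ∏ a, A a a ^ (m : Multiset ι).count a := by
        simp only [hA.symPow.det_eq_prod_diag, hA.symPow_apply_self,
          Sym.prod_comp_toFn_eq_prod_pow_count fun a => A a a]
    _ = ∏ a, A a a ^ ∑ m : Sym ι r, (m : Multiset ι).count a := by
        rw [prod_comm]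
        simp only [prod_pow_eq_pow_sum]
    _ = A.det ^ (Fintype.card ι + r - 1).choose (r - 1) := by
        simp only [Sym.sum_count_eq_choose hr, prod_pow, hA.det_eq_prod_diag]

end IsTriangularBy

theorem det_symPow_of_field {K : Type*} [Field K] (hr : 1 ≤ r) (A : Matrix ι ι K) :
    (A.symPow r).det = A.det ^ (Fintype.card ι + r - 1).choose (r - 1) :=
  diagonal_transvection_induction (fun B => (B.symPow r).det = B.det ^ _) A
    (fun d _ => (isTriangularBy_diagonal 0 d).det_symPow hr)
    (fun t => (isTriangularBy_transvection t.hij t.c).det_symPow hr)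
    (fun B C hB hC => by simp only [symPow_mul, det_mul, hB, hC, mul_pow])

theorem det_symPow (hr : 1 ≤ r) (A : Matrix ι ι S) :
    (A.symPow r).det = A.det ^ (Fintype.card ι + r - 1).choose (r - 1) := by
  let X := mvPolynomialX ι ι ℤ
  have hX : (X.symPow r).det = X.det ^ (Fintype.card ι + r - 1).choose (r - 1) := by
    apply IsFractionRing.injective (MvPolynomial (ι × ι) ℤ)
      (FractionRing (MvPolynomial (ι × ι) ℤ))
    rw [map_pow, RingHom.map_det, RingHom.map_det, RingHom.mapMatrix_apply,
      RingHom.mapMatrix_apply, symPow_map, det_symPow_of_field hr]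
  let ψ := MvPolynomial.eval₂Hom (Int.castRingHom S) fun p : ι × ι => A p.1 p.2
  have hA : X.map ψ = A := mvPolynomialX_map_eval₂ _ A
  rw [← hA, ← symPow_map, ← RingHom.mapMatrix_apply, ← RingHom.map_det, hX, map_pow,
    RingHom.map_det, RingHom.mapMatrix_apply]

end Matrix

theorem stmt1_general {R M : Type*} [CommRing R] [AddCommGroup M] [Module R M]
    (n r : ℕ) (hr : 1 ≤ r)
    (b : Module.Basis (Fin n) R M) (f : M →ₗ[R] M) :
    LinearMap.det (SymPow.map R (n := r) f) =
      (LinearMap.det f) ^ ((n + r - 1).factorial / (n.factorial * (r - 1).factorial)) := by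
  have hexp : (n + r - 1).factorial / (n.factorial * (r - 1).factorial) =
      (Fintype.card (Fin n) + r - 1).choose (r - 1) := by
    rw [Fintype.card_fin, Nat.choose_eq_factorial_div_factorial (by omega),
      show n + r - 1 - (r - 1) = n by omega, mul_comm]
  rw [hexp, ← LinearMap.det_toMatrix (SymPow.basis b), SymPow.toMatrix_map,
    Matrix.det_symPow hr, LinearMap.det_toMatrix]

theorem stmt1 {R M : Type*} [CommRing R] [AddCommGroup M] [Module R M]
    (n r : ℕ) (hn : 1 ≤ n) (hr : 1 ≤ r)
    (b : Module.Basis (Fin n) R M) (f : M →ₗ[R] M) :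
    LinearMap.det (SymPow.map R (n := r) f) =
      (LinearMap.det f) ^ ((n + r - 1).factorial / (n.factorial * (r - 1).factorial)) :=
  stmt1_general n r hr b f
end

section
/- Let R be a commutative ring with 1, let M be a free R-module of rank n, let 1 ≤ r ≤ n, and let f : M → M be an R-linear endomorphism. Then the induced R-linear endomorphism ⋀^r(f) of the r-th exterior power ⋀^r M satisfies det(⋀^r(f)) = (det f)^{C(n-1, r-1)}, where C(n-1, r-1) = (n-1)!/((r-1)!·(n-r)!). -/
/-- The linear map `⋀[R]^n M →ₗ[R] ⋀[R]^n N` functorially induced by `f : M →ₗ[R] N`. -/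
noncomputable def exteriorPowerMap {R M N : Type*} [CommRing R] [AddCommGroup M] [Module R M]
    [AddCommGroup N] [Module R N] (n : ℕ) (f : M →ₗ[R] N) :
    ⋀[R]^n M →ₗ[R] ⋀[R]^n N :=
  (ExteriorAlgebra.map f).toLinearMap.restrict (p := ⋀[R]^n M) (q := ⋀[R]^n N) (by
    intro x hx
    have h1 : Submodule.map (ExteriorAlgebra.map f).toLinearMap
        ((LinearMap.range (ExteriorAlgebra.ι R (M := M))) ^ n) ≤
        (LinearMap.range (ExteriorAlgebra.ι R (M := N))) ^ n := by
      rw [Submodule.map_pow]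
      refine pow_le_pow_left' ?_ n
      rintro _ ⟨_, ⟨m, rfl⟩, rfl⟩
      exact ⟨f m, (ExteriorAlgebra.map_apply_ι f m).symm⟩
    exact h1 (Submodule.mem_map_of_mem hx))


/-!
In the basis of `⋀^r M` given by the wedges of `r`-subsets of a basis of `M`, the matrix of
`⋀^r f` is the `r`-th compound matrix of the matrix of `f`, whose entries are its `r × r` minors.
Functoriality of `⋀^r` makes compound matrices multiplicative, so over a field it suffices to treat
diagonal matrices and transvections, since these generate all matrices under multiplication. The
compound of `diagonal d` is diagonal with entries `∏ k ∈ s, d k`, and each `d k` occurs in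
`C(n-1, r-1)` of them. For a transvection, `p(c) = det (compound (transvection i j c))` is a
polynomial with `p(X) p(-X) = 1` and `p(0) = 1`, hence `p = 1`. A general commutative ring is
reached by specializing the generic matrix over `ℤ[X_ij]`, which embeds in its fraction field.
-/

open Set.powersetCard

theorem Finset.prod_powersetCard_prod {α M : Type*} [DecidableEq α] [CommMonoid M]
    (t : Finset α) {r : ℕ} (hr : 1 ≤ r) (d : α → M) :
    ∏ s ∈ t.powersetCard r, ∏ k ∈ s, d k = (∏ k ∈ t, d k) ^ (t.card - 1).choose (r - 1) := by
  rw [Finset.prod_comm' (t' := t) (s' := fun k => (t.powersetCard r).filter ({k} ⊆ ·))]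
  · rw [← Finset.prod_pow]
    refine Finset.prod_congr rfl fun k hk => ?_
    rw [Finset.prod_const, Finset.card_filter_powersetCard_subset _ _ _ (by simpa using hk)
      (by simpa using hr), Finset.card_singleton]
  · intro s k
    simp only [Finset.mem_powersetCard, Finset.mem_filter, Finset.singleton_subset_iff]
    constructor
    · rintro ⟨⟨hst, hs⟩, hk⟩
      exact ⟨⟨⟨hst, hs⟩, hk⟩, hst hk⟩
    · rintro ⟨⟨⟨hst, hs⟩, hk⟩, -⟩
      exact ⟨⟨hst, hs⟩, hk⟩

namespace Matrix

theorem transvection_map {R S n : Type*} [CommRing R] [CommRing S] [DecidableEq n]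
    (φ : R →+* S) (i j : n) (c : R) :
    (transvection i j c).map φ = transvection i j (φ c) := by
  simp [transvection, Matrix.map_add, map_single]

section Compound

variable {R S : Type*} [CommRing R] [CommRing S] {m n : Type*} [LinearOrder m] [LinearOrder n]
  (r : ℕ)

noncomputable def compound (A : Matrix m n R) :
    Matrix (Set.powersetCard m r) (Set.powersetCard n r) R :=
  of fun s t => (A.submatrix (ofFinEmbEquiv.symm s) (ofFinEmbEquiv.symm t)).det

theorem compound_apply (A : Matrix m n R) (s : Set.powersetCard m r)
    (t : Set.powersetCard n r) :
    compound r A s t = (A.submatrix (ofFinEmbEquiv.symm s) (ofFinEmbEquiv.symm t)).det :=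
  rfl

theorem compound_map (φ : R →+* S) (A : Matrix m n R) :
    compound r (A.map φ) = (compound r A).map φ := by
  ext s t
  simp [compound_apply, RingHom.map_det, submatrix_map]

theorem compound_diagonal (d : n → R) :
    compound r (diagonal d) = diagonal fun s => ∏ k ∈ s.val, d k := by
  ext s t
  obtain rfl | hst := eq_or_ne s t
  · rw [compound_apply, submatrix_diagonal _ _ (ofFinEmbEquiv.symm s).injective, det_diagonal,
      diagonal_apply_eq]
    conv_rhs => rw [← Finset.map_orderEmbOfFin_univ s.val s.prop, Finset.prod_map]
    rfl
  · obtain ⟨a, has, hat⟩ := (exists_mem_notMem_iff_ne s t).mp hst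
    obtain ⟨i, rfl⟩ := (mem_range_ofFinEmbEquiv_symm_iff_mem s a).mpr has
    rw [diagonal_apply_ne _ hst, compound_apply]
    refine det_eq_zero_of_row_eq_zero i fun j => diagonal_apply_ne _ fun h => hat ?_
    rw [h, ← mem_range_ofFinEmbEquiv_symm_iff_mem]
    exact Set.mem_range_self j

theorem compound_one : compound r (1 : Matrix n n R) = 1 := by
  rw [← diagonal_one, compound_diagonal]
  simp

end Compound

end Matrix

theorem exteriorPower.toMatrix_map {R M N ι κ : Type*} [CommRing R] [AddCommGroup M] [Module R M]
    [AddCommGroup N] [Module R N] [LinearOrder ι] [LinearOrder κ] [Fintype ι] [Fintype κ]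
    (r : ℕ) (b : Module.Basis ι R M) (c : Module.Basis κ R N) (f : M →ₗ[R] N) :
    LinearMap.toMatrix (b.exteriorPower r) (c.exteriorPower r) (map r f) =
      Matrix.compound r (LinearMap.toMatrix b c f) := by
  ext s t
  rw [LinearMap.toMatrix_apply, basis_apply, map_apply_ιMulti_family, basis_repr_apply,
    ιMulti_family, ιMultiDual_apply_ιMulti, Matrix.compound_apply, ← Matrix.det_transpose]
  congr 1
  ext i j
  simp [LinearMap.toMatrix_apply]

namespace Matrix

variable {n : Type*} [LinearOrder n] [Fintype n] {r : ℕ}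

theorem compound_mul {R l m : Type*} [CommRing R] [LinearOrder l] [LinearOrder m] [Fintype l]
    [Fintype m] (A : Matrix l m R) (B : Matrix m n R) :
    compound r (A * B) = compound r A * compound r B := by
  let bl := Pi.basisFun R l
  let bm := Pi.basisFun R m
  let bn := Pi.basisFun R n
  rw [← LinearMap.toMatrix_toLin bm bl A, ← LinearMap.toMatrix_toLin bn bm B,
    ← LinearMap.toMatrix_comp, ← exteriorPower.toMatrix_map, exteriorPower.map_comp,
    LinearMap.toMatrix_comp _ (bm.exteriorPower r), exteriorPower.toMatrix_map,
    exteriorPower.toMatrix_map]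

open Polynomial in
theorem det_compound_transvection_X {i j : n} (hij : i ≠ j) :
    (compound r (transvection i j (X : ℤ[X]))).det = 1 := by
  set p := (compound r (transvection i j (X : ℤ[X]))).det
  have hunit : IsUnit p := by
    refine IsUnit.of_mul_eq_one ((aeval (-X : ℤ[X])).toRingHom p) ?_
    rw [RingHom.map_det, RingHom.mapMatrix_apply, ← compound_map, transvection_map,
      AlgHom.toRingHom_eq_coe, RingHom.coe_coe, aeval_X, ← det_mul, ← compound_mul,
      transvection_mul_transvection_same _ _ hij, add_neg_cancel, transvection_zero, compound_one,
      det_one]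
  have heval : p.eval 0 = 1 := by
    rw [← coe_evalRingHom, RingHom.map_det, RingHom.mapMatrix_apply, ← compound_map,
      transvection_map, coe_evalRingHom, eval_X, transvection_zero, compound_one, det_one]
  rw [eq_C_of_natDegree_eq_zero (natDegree_eq_zero_of_isUnit hunit), coeff_zero_eq_eval_zero,
    heval, map_one]

theorem det_compound_transvection {R : Type*} [CommRing R] {i j : n} (hij : i ≠ j) (c : R) :
    (compound r (transvection i j c)).det = 1 := by
  let φ := (Polynomial.aeval (R := ℤ) c).toRingHom
  have hc : transvection i j c = (transvection i j Polynomial.X).map φ := by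
    rw [transvection_map]
    simp [φ]
  rw [hc, compound_map, ← RingHom.mapMatrix_apply, ← RingHom.map_det,
    det_compound_transvection_X hij, map_one]

theorem det_compound_diagonal {R : Type*} [CommRing R] (hr : 1 ≤ r) (d : n → R) :
    (compound r (diagonal d)).det = (diagonal d).det ^ (Fintype.card n - 1).choose (r - 1) := by
  rw [compound_diagonal, det_diagonal, det_diagonal, ← Finset.card_univ,
    ← Finset.prod_powersetCard_prod _ hr]
  exact (Finset.prod_subtype _ (p := (· ∈ Set.powersetCard n r))
    (fun s => by simp [Set.powersetCard.mem_iff]) fun s => ∏ k ∈ s, d k).symm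

theorem det_compound_of_field {K : Type*} [Field K] (hr : 1 ≤ r) (A : Matrix n n K) :
    (compound r A).det = A.det ^ (Fintype.card n - 1).choose (r - 1) := by
  induction A using diagonal_transvection_induction with
  | hdiag d => exact det_compound_diagonal hr d
  | htransvec t =>
    rw [TransvectionStruct.toMatrix, det_compound_transvection t.hij,
      det_transvection_of_ne _ _ t.hij, one_pow]
  | hmul A B hA hB => rw [compound_mul, det_mul, hA, hB, det_mul, mul_pow]

theorem det_compound {R : Type*} [CommRing R] (hr : 1 ≤ r) (A : Matrix n n R) :
    (compound r A).det = A.det ^ (Fintype.card n - 1).choose (r - 1) := by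
  let X := mvPolynomialX n n ℤ
  have hX : (compound r X).det = X.det ^ (Fintype.card n - 1).choose (r - 1) := by
    apply IsFractionRing.injective (MvPolynomial (n × n) ℤ) (FractionRing (MvPolynomial (n × n) ℤ))
    rw [RingHom.map_det, RingHom.mapMatrix_apply, ← compound_map, det_compound_of_field hr,
      map_pow, RingHom.map_det, RingHom.mapMatrix_apply]
  let φ := MvPolynomial.eval₂Hom (Int.castRingHom R) fun p : n × n => A p.1 p.2
  have hA : X.map φ = A := mvPolynomialX_map_eval₂ (Int.castRingHom R) A
  rw [← hA, compound_map, ← RingHom.mapMatrix_apply, ← RingHom.map_det, hX, map_pow,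
    RingHom.map_det, RingHom.mapMatrix_apply]

end Matrix

theorem exteriorPowerMap_eq_map {R M N : Type*} [CommRing R] [AddCommGroup M] [Module R M]
    [AddCommGroup N] [Module R N] (r : ℕ) (f : M →ₗ[R] N) :
    exteriorPowerMap r f = exteriorPower.map r f := by
  refine exteriorPower.linearMap_ext (AlternatingMap.ext fun v => Subtype.ext ?_)
  change ExteriorAlgebra.map f (ExteriorAlgebra.ιMulti R r v) = _
  rw [LinearMap.compAlternatingMap_apply, ExteriorAlgebra.map_apply_ιMulti,
    exteriorPower.map_apply_ιMulti, exteriorPower.ιMulti_apply_coe]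

theorem stmt2_general {R M : Type*} [CommRing R] [AddCommGroup M] [Module R M]
    (n r : ℕ) (hr1 : 1 ≤ r)
    (b : Module.Basis (Fin n) R M) (f : M →ₗ[R] M) :
    LinearMap.det (exteriorPowerMap r f) = (LinearMap.det f) ^ Nat.choose (n - 1) (r - 1) := by
  rw [exteriorPowerMap_eq_map, ← LinearMap.det_toMatrix (b.exteriorPower r),
    exteriorPower.toMatrix_map, Matrix.det_compound hr1, LinearMap.det_toMatrix, Fintype.card_fin]

theorem stmt2 {R M : Type*} [CommRing R] [AddCommGroup M] [Module R M]
    (n r : ℕ) (hr1 : 1 ≤ r) (hrn : r ≤ n)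
    (b : Module.Basis (Fin n) R M) (f : M →ₗ[R] M) :
    LinearMap.det (exteriorPowerMap r f) = (LinearMap.det f) ^ Nat.choose (n - 1) (r - 1) :=
  stmt2_general n r hr1 b f
end

section
/- Let R be a commutative ring with 1, let M be a free R-module of rank 2 with basis {x, y}, and let k ≥ 2 be an even integer. Then the canonical map φ_{2,k} : Sym²(Sym^k M) → Sym^k(⋀²M) satisfies, for every 1 ≤ i ≤ k, φ_{2,k}((x^i·y^{k−i})·(x^{k−i}·y^i)) = (−1)^{k−i}·(k−i)!·i!·(x∧y)^k, where x^i·y^{k−i} denotes the product of i copies of x with k−i copies of y in Sym^k M and (x∧y)^k the k-th power of x∧y in Sym^k(⋀²M). -/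
open scoped TensorProduct

/-! Expanding `φ` by its defining formula, the summand for `σ` is a product of wedges of basis
vectors `b 0 = x`, `b 1 = y`. It vanishes unless `σ` sends the `i` slots holding `x` in the first
factor onto the `i` slots holding `y` in the second, and the complementary slots onto each other;
then it equals `(-1)^(k-i) (x ∧ y)^k`, one sign for each factor `y ∧ x`. Such `σ` are pairs of
bijections between these blocks, so there are `i! (k-i)!` of them. -/

namespace Equiv

variable {α : Type*} (p q : α → Prop) [DecidablePred p] [DecidablePred q]

def permIffEquivProd :
    {σ : Perm α // ∀ a, p a ↔ q (σ a)} ≃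
      ({a // p a} ≃ {a // q a}) × ({a // ¬p a} ≃ {a // ¬q a}) where
  toFun σ := (σ.1.subtypeEquiv σ.2, σ.1.subtypeEquiv fun a => not_congr (σ.2 a))
  invFun e := ⟨e.1.subtypeCongr e.2, fun a => by
    by_cases h : p a
    · simp [subtypeCongr, sumCompl_symm_apply_of_pos h, h, (e.1 ⟨a, h⟩).2]
    · simp [subtypeCongr, sumCompl_symm_apply_of_neg h, h, (e.2 ⟨a, h⟩).2]⟩
  left_inv σ := by
    ext a
    by_cases h : p a
    · simp [subtypeCongr, sumCompl_symm_apply_of_pos h]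
    · simp [subtypeCongr, sumCompl_symm_apply_of_neg h]
  right_inv e := by
    ext ⟨a, h⟩ <;>
      simp [subtypeCongr, sumCompl_symm_apply_of_pos, sumCompl_symm_apply_of_neg, h]

end Equiv

theorem Nat.card_subtype_perm_iff {α : Type*} [Finite α] (p q : α → Prop) [DecidablePred p]
    [DecidablePred q] (h : Nat.card {a // p a} = Nat.card {a // q a}) :
    Nat.card {σ : Equiv.Perm α // ∀ a, p a ↔ q (σ a)} =
      (Nat.card {a // p a}).factorial * (Nat.card {a // ¬p a}).factorial := by
  classical
  have : Fintype α := Fintype.ofFinite α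
  simp only [Nat.card_eq_fintype_card] at h ⊢
  have hc : Fintype.card {a // ¬p a} = Fintype.card {a // ¬q a} := by
    rw [Fintype.card_subtype_compl, Fintype.card_subtype_compl, h]
  rw [Fintype.card_congr (Equiv.permIffEquivProd p q), Fintype.card_prod,
    Fintype.card_equiv (Fintype.equivOfCardEq h), Fintype.card_equiv (Fintype.equivOfCardEq hc)]

theorem Fin.natCard_subtype_val_lt (n m : ℕ) :
    Nat.card {t : Fin n // (t : ℕ) < m} = min n m := by
  rw [Nat.card_eq_fintype_card, Fintype.card_subtype, Fin.card_filter_val_lt]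

theorem Fin.natCard_subtype_not_val_lt (n m : ℕ) :
    Nat.card {t : Fin n // ¬(t : ℕ) < m} = n - m := by
  rw [Nat.card_eq_fintype_card, Fintype.card_subtype_compl, Fintype.card_fin,
    ← Nat.card_eq_fintype_card, Fin.natCard_subtype_val_lt]
  omega

section Wedge

variable {R : Type*} [CommRing R] {M : Type*} [AddCommGroup M] [Module R M]

theorem wedgeMk_self (m : M) : wedgeMk R ![m, m] = 0 :=
  Subtype.ext <| (ExteriorAlgebra.ιMulti R 2).map_eq_zero_of_eq ![m, m] (i := 0) (j := 1)
    rfl (by decide)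

theorem wedgeMk_swap (m₁ m₂ : M) : wedgeMk R ![m₂, m₁] = -wedgeMk R ![m₁, m₂] := by
  apply Subtype.ext
  have h := (ExteriorAlgebra.ιMulti R 2).map_swap ![m₁, m₂] (i := 0) (j := 1) (by decide)
  have hswap : ![m₁, m₂] ∘ Equiv.swap (0 : Fin 2) 1 = ![m₂, m₁] := by
    ext t; fin_cases t <;> rfl
  rwa [hswap] at h

end Wedge

namespace SymPow

variable {R : Type*} [CommRing R] {M : Type*} [AddCommGroup M] [Module R M] {n : ℕ}

theorem prod_eq_zero_of_apply_eq_zero (v : Fin n → M) (t : Fin n) (h : v t = 0) :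
    SymPow.prod R v = 0 := by
  rw [SymPow.prod, MultilinearMap.map_coord_zero _ t h, map_zero]

theorem prod_smul_univ (c : Fin n → R) (v : Fin n → M) :
    SymPow.prod R (fun t => c t • v t) = (∏ t, c t) • SymPow.prod R v := by
  rw [SymPow.prod, MultilinearMap.map_smul_univ, map_smul, SymPow.prod]

theorem prod_wedgeMk_ite (x y : M) (p q : Fin n → Prop) [DecidablePred p] [DecidablePred q] :
    SymPow.prod R (fun t => wedgeMk R ![if p t then x else y, if q t then x else y]) =
      if ∀ t, p t ↔ ¬q t then
        ((-1 : ℤ) ^ Nat.card {t // ¬p t}) • SymPow.prod R (fun _ => wedgeMk R ![x, y])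
      else 0 := by
  split_ifs with hpq
  · have hfactor : (fun t => wedgeMk R ![if p t then x else y, if q t then x else y]) =
        fun t => (if p t then 1 else -1 : R) • wedgeMk R ![x, y] := by
      ext t
      by_cases h : p t
      · simp [h, (hpq t).mp h]
      · rw [if_neg h, if_pos (not_not.mp (mt (hpq t).mpr h)), wedgeMk_swap]
        simp [h]
    rw [hfactor, prod_smul_univ, Finset.prod_ite, Finset.prod_const_one, one_mul,
      Finset.prod_const, ← Fintype.card_subtype, ← Nat.card_eq_fintype_card,
      ← Int.cast_smul_eq_zsmul R]
    push_cast
    rfl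
  · obtain ⟨t, ht⟩ := not_forall.mp hpq
    refine prod_eq_zero_of_apply_eq_zero _ t ?_
    have hpq' : p t ↔ q t := by tauto
    by_cases h : p t
    · simp [h, hpq'.mp h, wedgeMk_self]
    · simp [h, mt hpq'.mpr h, wedgeMk_self]

end SymPow

theorem stmt8_general {R M : Type*} [CommRing R] [AddCommGroup M] [Module R M]
    (b : Module.Basis (Fin 2) R M) (k : ℕ)
    (φ : SymPow R 2 (SymPow R k M) →ₗ[R] SymPow R k (⋀[R]^2 M))
    (hφ : ∀ a : Fin 2 → Fin k → M,
      φ (SymPow.prod R ![SymPow.prod R (a 0), SymPow.prod R (a 1)]) =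
        ∑ σ : Equiv.Perm (Fin k),
          SymPow.prod R (fun i : Fin k => wedgeMk R ![a 0 i, a 1 (σ i)])) :
    ∀ i : ℕ, 1 ≤ i → i ≤ k →
      φ (SymPow.prod R
          ![SymPow.prod R (fun t : Fin k => if (t : ℕ) < i then b 0 else b 1),
            SymPow.prod R (fun t : Fin k => if (t : ℕ) < k - i then b 0 else b 1)]) =
        ((-1 : ℤ) ^ (k - i) * (k - i).factorial * i.factorial) •
          SymPow.prod R (fun _ : Fin k => wedgeMk R ![b 0, b 1]) := by
  intro i _ hik
  have expand := hφ ![fun t => if (t : ℕ) < i then b 0 else b 1,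
    fun t => if (t : ℕ) < k - i then b 0 else b 1]
  simp only [Matrix.cons_val_zero, Matrix.cons_val_one, SymPow.prod_wedgeMk_ite] at expand
  have hcard :
      Nat.card {t : Fin k // (t : ℕ) < i} = Nat.card {s : Fin k // ¬(s : ℕ) < k - i} := by
    rw [Fin.natCard_subtype_val_lt, Fin.natCard_subtype_not_val_lt]
    omega
  rw [expand, Finset.sum_ite, Finset.sum_const_zero, add_zero, Finset.sum_const,
    ← Fintype.card_subtype, ← Nat.card_eq_fintype_card, Nat.card_subtype_perm_iff _ _ hcard,
    Fin.natCard_subtype_val_lt, Fin.natCard_subtype_not_val_lt, min_eq_right hik,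
    ← natCast_zsmul, smul_smul]
  congr 1
  push_cast
  ring

theorem stmt8 {R M : Type*} [CommRing R] [AddCommGroup M] [Module R M]
    (b : Module.Basis (Fin 2) R M) (k : ℕ) (hk : 2 ≤ k) (hkeven : Even k)
    (φ : SymPow R 2 (SymPow R k M) →ₗ[R] SymPow R k (⋀[R]^2 M))
    (hφ : ∀ a : Fin 2 → Fin k → M,
      φ (SymPow.prod R ![SymPow.prod R (a 0), SymPow.prod R (a 1)]) =
        ∑ σ : Equiv.Perm (Fin k),
          SymPow.prod R (fun i : Fin k => wedgeMk R ![a 0 i, a 1 (σ i)])) :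
    ∀ i : ℕ, 1 ≤ i → i ≤ k →
      φ (SymPow.prod R
          ![SymPow.prod R (fun t : Fin k => if (t : ℕ) < i then b 0 else b 1),
            SymPow.prod R (fun t : Fin k => if (t : ℕ) < k - i then b 0 else b 1)]) =
        ((-1 : ℤ) ^ (k - i) * (k - i).factorial * i.factorial) •
          SymPow.prod R (fun _ : Fin k => wedgeMk R ![b 0, b 1]) :=
  stmt8_general b k φ hφ
end

section
/- Let R be a commutative ring with 1, let M be a free R-module of rank 2, and let k ≥ 2 be an even integer. Then the composite φ_{2,k} ∘ φ_{k,2} : Sym^k(⋀²M) → Sym^k(⋀²M) equals multiplication by the scalar (k+1)!/2, i.e. φ_{2,k} ∘ φ_{k,2} = ((k+1)!/2) · id_{Sym^k(⋀²M)}. -/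
open scoped TensorProduct

/-! Every element of `⋀[R]^2 M` is a multiple of `e = b 0 ∧ b 1`, so by multilinearity it is
enough to evaluate the composite on `E = e ⋯ e`. In `φ₁ E` the term indexed by
`τ : Fin k → Perm (Fin 2)` is `∏ sgn (τ j) • (∏ b (τ j 0)) · (∏ b (τ j 1))`, and `φ₂` sends it to
`∑ σ, ∏ sgn (τ i) • (b (τ i 0) ∧ b (τ (σ i) 1))`; each factor is `e` if `τ (σ i) = τ i` and `0`
otherwise. Hence the coefficient of `E` counts pairs `(τ, σ)` with `τ ∘ σ = τ` and `τ` normalised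
at `0`. If `τ` takes the value `1` on a set `A ∋ 0` of size `j + 1`, its stabiliser has order
`(j + 1)! (k - j - 1)!`, and there are `(k - 1).choose j` such `A`, so the count is
`∑ j, (j + 1) (k - 1)! = (k + 1)! / 2`. -/

open Finset Equiv
open scoped Nat

theorem two_mul_sum_choose_mul_factorial (m : ℕ) :
    2 * ∑ j ∈ range (m + 1), m.choose j * ((j + 1)! * (m - j)!) = (m + 2)! := by
  have hterm : ∀ j ∈ range (m + 1), m.choose j * ((j + 1)! * (m - j)!) = (j + 1) * m ! := by
    intro j hj
    rw [← Nat.choose_mul_factorial_mul_factorial (Nat.lt_succ_iff.mp (mem_range.mp hj)),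
      Nat.factorial_succ]
    ring
  have gauss : 2 * ∑ j ∈ range (m + 1), (j + 1) = (m + 2) * (m + 1) := by
    have := sum_range_id_mul_two (m + 2)
    rw [sum_range_succ'] at this
    simpa [mul_comm] using this
  rw [sum_congr rfl hterm, ← sum_mul, ← mul_assoc, gauss, Nat.factorial_succ, Nat.factorial_succ]
  ring

section Counting

variable {α : Type*} [Fintype α] [DecidableEq α]

theorem two_mul_sum_factorial_mul_factorial_of_mem (a : α) :
    2 * ∑ A with a ∈ A, (#A)! * (Fintype.card α - #A)! = (Fintype.card α + 1)! := by
  obtain ⟨m, hm⟩ : ∃ m, Fintype.card α = m + 1 :=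
    Nat.exists_eq_add_one.mpr (Fintype.card_pos_iff.mpr ⟨a⟩)
  have ha : ∀ t ∈ (univ.erase a).powerset, a ∉ t := fun t ht h =>
    notMem_erase a univ (mem_powerset.mp ht h)
  have hcard : #(univ.erase a) = m := by simp [hm]
  rw [sum_filter, ← powerset_univ, ← insert_erase (mem_univ a),
    sum_powerset_insert (notMem_erase a univ), sum_eq_zero fun t ht => if_neg (ha t ht), zero_add,
    sum_congr rfl fun t ht => by rw [if_pos (mem_insert_self a t), card_insert_of_notMem (ha t ht)],
    sum_powerset_apply_card (fun j => (j + 1)! * (Fintype.card α - (j + 1))!), hcard, hm]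
  simpa only [smul_eq_mul, Nat.add_sub_add_right] using two_mul_sum_choose_mul_factorial m

theorem card_stabilizer_perm_fin_two (τ : α → Perm (Fin 2)) :
    #{σ : Perm α | τ ∘ σ = τ} = (#{j | τ j = 1})! * (Fintype.card α - #{j | τ j = 1})! := by
  have hperm : (univ : Finset (Perm (Fin 2))) = {1, swap 0 1} := by decide
  have hswap : ∀ j, τ j = swap 0 1 ↔ ¬τ j = 1 := by
    intro j; generalize τ j = π; revert π; decide
  rw [← Fintype.card_subtype, DomMulAct.stabilizer_card, hperm,
    prod_pair (by decide : (1 : Perm (Fin 2)) ≠ swap 0 1)]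
  simp only [Fintype.card_subtype, hswap, filter_not, card_sdiff, inter_univ]
  rfl

theorem sum_filter_apply_eq_one_eq_sum_filter_mem (a : α) (g : ℕ → ℕ) :
    ∑ τ : α → Perm (Fin 2) with τ a = 1, g #{j | τ j = 1} = ∑ A with a ∈ A, g #A := by
  have hswap : ∀ π : Perm (Fin 2), π ≠ 1 → π = swap 0 1 := by decide
  refine sum_nbij' (fun τ => ({j | τ j = 1} : Finset α)) (fun A j => if j ∈ A then 1 else swap 0 1)
    ?_ ?_ ?_ ?_ fun _ _ => rfl
  · simp +contextual
  · simp +contextual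
  · intro τ _
    funext j
    by_cases h : τ j = 1 <;> simp [h, hswap]
  · intro A _
    ext j
    by_cases h : j ∈ A <;> simp [h, (by decide : swap (0 : Fin 2) 1 ≠ 1)]

theorem two_mul_sum_card_stabilizer (a : α) :
    2 * ∑ τ : α → Perm (Fin 2) with τ a = 1, #{σ : Perm α | τ ∘ σ = τ} =
      (Fintype.card α + 1)! := by
  simp only [card_stabilizer_perm_fin_two]
  rw [sum_filter_apply_eq_one_eq_sum_filter_mem a fun n => n ! * (Fintype.card α - n)!,
    two_mul_sum_factorial_mul_factorial_of_mem]

end Counting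

namespace SymPow

variable {R : Type*} [CommRing R] {M : Type*} [AddCommGroup M] [Module R M] {n : ℕ}

theorem prod_smul (c : Fin n → R) (v : Fin n → M) :
    SymPow.prod R (fun i => c i • v i) = (∏ i, c i) • SymPow.prod R v := by
  rw [SymPow.prod, MultilinearMap.map_smul_univ, map_smul, SymPow.prod]

theorem prod_zsmul (c : Fin n → ℤ) (v : Fin n → M) :
    (∏ i, c i) • SymPow.prod R v = SymPow.prod R (fun i => c i • v i) := by
  simp only [← Int.cast_smul_eq_zsmul R, prod_smul, Int.cast_prod]

theorem prod_ite_zero (p : Fin n → Prop) [DecidablePred p] (v : Fin n → M) :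
    SymPow.prod R (fun i => if p i then v i else 0) =
      if ∀ i, p i then SymPow.prod R v else 0 := by
  split_ifs with h
  · simp only [h, if_true]
  · obtain ⟨i, hi⟩ := not_forall.mp h
    rw [SymPow.prod, (PiTensorProduct.tprod R).map_coord_zero i (if_neg hi), map_zero]

theorem linearMap_ext_s9 {N : Type*} [AddCommGroup N] [Module R N]
    {f g : SymPow R n M →ₗ[R] N} (h : ∀ v, f (SymPow.prod R v) = g (SymPow.prod R v)) :
    f = g :=
  Submodule.linearMap_qext _ <| PiTensorProduct.ext <| MultilinearMap.ext h

end SymPow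

section Wedge

variable {R : Type*} [CommRing R] {M : Type*} [AddCommGroup M] [Module R M]

theorem exists_eq_smul_wedgeMk_basis {n : ℕ} (b : Module.Basis (Fin n) R M) (x : ⋀[R]^n M) :
    ∃ c : R, x = c • wedgeMk R b := by
  have hfamily : ∀ s, exteriorPower.ιMulti_family R n b s = wedgeMk R b := fun s => by
    rw [exteriorPower.ιMulti_family, (Set.powersetCard.ofFinEmbEquiv.symm s).strictMono.eq_id]
    rfl
  have hspan : Submodule.span R {wedgeMk R b} = ⊤ := by
    have : Nonempty (Set.powersetCard (Fin n) n) := ⟨Set.powersetCard.ofCard (card_fin n)⟩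
    rw [← exteriorPower.ιMulti_family_span_of_span R b.span_eq (n := n), funext hfamily,
      Set.range_const]
  obtain ⟨c, hc⟩ := Submodule.mem_span_singleton.mp (hspan ▸ Submodule.mem_top : x ∈ _)
  exact ⟨c, hc.symm⟩

theorem sign_smul_wedgeMk_basis (b : Module.Basis (Fin 2) R M) (π ρ : Perm (Fin 2)) :
    (Perm.sign π : ℤ) • wedgeMk R ![b (π 0), b (ρ 1)] =
      if ρ = π then wedgeMk R b else 0 := by
  have hperm : ∀ π : Perm (Fin 2), π = 1 ∨ π = swap 0 1 := by decide
  have hb : ![b 0, b 1] = b := by ext i; fin_cases i <;> rfl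
  have hself : ∀ x : M, wedgeMk R ![x, x] = 0 := fun x =>
    (exteriorPower.ιMulti R 2).map_eq_zero_of_eq ![x, x] (i := 0) (j := 1) rfl (by decide)
  have hswap : wedgeMk R ![b 1, b 0] = - wedgeMk R b := by
    rw [← hb]
    exact (exteriorPower.ιMulti R 2).map_swap ![b 0, b 1] (i := 0) (j := 1) (by decide)
  have hne : (1 : Perm (Fin 2)) ≠ swap 0 1 := by decide
  rcases hperm π with rfl | rfl <;> rcases hperm ρ with rfl | rfl <;>
    simp [hb, hself, hswap, hne]

theorem sign_smul_sum_prod_wedgeMk_basis (b : Module.Basis (Fin 2) R M) {k : ℕ}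
    (τ : Fin k → Perm (Fin 2)) :
    (∏ j, (Perm.sign (τ j) : ℤ)) •
        ∑ σ : Perm (Fin k), SymPow.prod R (fun i => wedgeMk R ![b (τ i 0), b (τ (σ i) 1)]) =
      #{σ : Perm (Fin k) | τ ∘ σ = τ} • SymPow.prod R (fun _ : Fin k => wedgeMk R b) := by
  simp only [smul_sum, SymPow.prod_zsmul, sign_smul_wedgeMk_basis, SymPow.prod_ite_zero,
    ← funext_iff, Function.comp_def]
  rw [← sum_filter, sum_const]

end Wedge

theorem stmt9_general {R M : Type*} [CommRing R] [AddCommGroup M] [Module R M]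
    (b : Module.Basis (Fin 2) R M) (k : ℕ) (hk0 : 0 < k)
    (φ₁ : SymPow R k (⋀[R]^2 M) →ₗ[R] SymPow R 2 (SymPow R k M))
    (hφ₁ : ∀ a : Fin k → Fin 2 → M,
      φ₁ (SymPow.prod R fun j : Fin k => wedgeMk R (a j)) =
        ∑ τ ∈ Finset.univ.filter
            (fun τ : Fin k → Equiv.Perm (Fin 2) => τ ⟨0, hk0⟩ = 1),
          (∏ j : Fin k, (Equiv.Perm.sign (τ j) : ℤ)) •
            SymPow.prod R (fun i : Fin 2 => SymPow.prod R (fun j : Fin k => a j (τ j i))))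
    (φ₂ : SymPow R 2 (SymPow R k M) →ₗ[R] SymPow R k (⋀[R]^2 M))
    (hφ₂ : ∀ a : Fin 2 → Fin k → M,
      φ₂ (SymPow.prod R ![SymPow.prod R (a 0), SymPow.prod R (a 1)]) =
        ∑ σ : Equiv.Perm (Fin k),
          SymPow.prod R (fun i : Fin k => wedgeMk R ![a 0 i, a 1 (σ i)])) :
    φ₂ ∘ₗ φ₁ = ((k + 1).factorial / 2 : ℕ) • LinearMap.id := by
  set E := SymPow.prod R fun _ : Fin k => wedgeMk R b
  have hE : φ₂ (φ₁ E) = ((k + 1)! / 2 : ℕ) • E := by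
    have hcount := two_mul_sum_card_stabilizer (⟨0, hk0⟩ : Fin k)
    rw [Fintype.card_fin] at hcount
    have hterm : ∀ τ : Fin k → Perm (Fin 2), φ₂ ((∏ j, (Perm.sign (τ j) : ℤ)) •
        SymPow.prod R fun i : Fin 2 => SymPow.prod R fun j => b (τ j i)) =
          #{σ : Perm (Fin k) | τ ∘ σ = τ} • E := fun τ => by
      rw [map_zsmul, ← sign_smul_sum_prod_wedgeMk_basis b τ, ← hφ₂ fun i j => b (τ j i)]
      congr
      ext i
      fin_cases i <;> rfl
    rw [hφ₁ fun _ => b, map_sum, sum_congr rfl fun τ _ => hterm τ, ← sum_smul]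
    congr 1
    omega
  refine SymPow.linearMap_ext_s9 fun v => ?_
  choose c hc using fun j => exists_eq_smul_wedgeMk_basis b (v j)
  rw [funext hc, SymPow.prod_smul, LinearMap.comp_apply, map_smul, map_smul, hE,
    LinearMap.smul_apply, LinearMap.id_apply, smul_comm]

theorem stmt9 {R M : Type*} [CommRing R] [AddCommGroup M] [Module R M]
    (b : Module.Basis (Fin 2) R M) (k : ℕ) (hk : 2 ≤ k) (hkeven : Even k) (hk0 : 0 < k)
    (φ₁ : SymPow R k (⋀[R]^2 M) →ₗ[R] SymPow R 2 (SymPow R k M))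
    (hφ₁ : ∀ a : Fin k → Fin 2 → M,
      φ₁ (SymPow.prod R fun j : Fin k => wedgeMk R (a j)) =
        ∑ τ ∈ Finset.univ.filter
            (fun τ : Fin k → Equiv.Perm (Fin 2) => τ ⟨0, hk0⟩ = 1),
          (∏ j : Fin k, (Equiv.Perm.sign (τ j) : ℤ)) •
            SymPow.prod R (fun i : Fin 2 => SymPow.prod R (fun j : Fin k => a j (τ j i))))
    (φ₂ : SymPow R 2 (SymPow R k M) →ₗ[R] SymPow R k (⋀[R]^2 M))
    (hφ₂ : ∀ a : Fin 2 → Fin k → M,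
      φ₂ (SymPow.prod R ![SymPow.prod R (a 0), SymPow.prod R (a 1)]) =
        ∑ σ : Equiv.Perm (Fin k),
          SymPow.prod R (fun i : Fin k => wedgeMk R ![a 0 i, a 1 (σ i)])) :
    φ₂ ∘ₗ φ₁ = ((k + 1).factorial / 2 : ℕ) • LinearMap.id :=
  stmt9_general b k hk0 φ₁ hφ₁ φ₂ hφ₂
end

section
/- Let R be a commutative ring with 1 and let M be a free R-module of rank 2. Then the sequence 0 → Sym²(⋀²M) →^{i} Sym²(Sym²M) →^{q} Sym⁴M → 0 is exact, where q is the canonical surjection induced by the identity of M^{⊗4}, and i is the R-linear map given, for a basis {x, y} of M, by i((x∧y)·(x∧y)) = (x·x)·(y·y) − (x·y)·(x·y); this i is independent of the chosen basis. -/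
open scoped TensorProduct

section Helpers
variable {R : Type*} [CommRing R] {M : Type*} [AddCommGroup M] [Module R M]
variable {P : Type*} [AddCommGroup P] [Module R P]

/-- Permutation invariance of the symmetric product. -/
theorem SymPow.prod_comp {n : ℕ} (σ : Equiv.Perm (Fin n)) (v : Fin n → M) :
    SymPow.prod R (v ∘ σ) = SymPow.prod R v := by
  have h : PiTensorProduct.tprod R v - PiTensorProduct.tprod R (v ∘ σ) ∈ symRel R n M :=
    Submodule.subset_span ⟨σ, v, rfl⟩
  have h2 : SymPow.prod R v - SymPow.prod R (v ∘ σ) = 0 := by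
    unfold SymPow.prod
    rw [← map_sub]
    exact (Submodule.Quotient.mk_eq_zero _).mpr h
  exact (sub_eq_zero.mp h2).symm

/-- Lift of a permutation-invariant multilinear map to the symmetric power. -/
noncomputable def SymPow.lift {n : ℕ} (f : MultilinearMap R (fun _ : Fin n => M) P)
    (hf : ∀ (σ : Equiv.Perm (Fin n)) (v : Fin n → M), f (v ∘ σ) = f v) :
    SymPow R n M →ₗ[R] P :=
  Submodule.liftQ _ (PiTensorProduct.lift f) (by
    rw [symRel, Submodule.span_le]
    rintro x ⟨σ, v, rfl⟩
    simp [LinearMap.mem_ker, hf σ v])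

@[simp] theorem SymPow.lift_prod {n : ℕ} (f : MultilinearMap R (fun _ : Fin n => M) P)
    (hf : ∀ (σ : Equiv.Perm (Fin n)) (v : Fin n → M), f (v ∘ σ) = f v) (v : Fin n → M) :
    SymPow.lift f hf (SymPow.prod R v) = f v := by
  unfold SymPow.lift SymPow.prod SymPow.mk
  erw [Submodule.liftQ_apply, PiTensorProduct.lift.tprod]

/-- A bilinear map as a multilinear map on `Fin 2`. -/
def mlin2 (f : M →ₗ[R] M →ₗ[R] P) : MultilinearMap R (fun _ : Fin 2 => M) P where
  toFun v := f (v 0) (v 1)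
  map_update_add' v i a b := by
    fin_cases i <;>
      simp [Function.update_apply, Fin.ext_iff]
  map_update_smul' v i c a := by
    fin_cases i <;>
      simp [Function.update_apply, Fin.ext_iff]

@[simp] theorem mlin2_apply (f : M →ₗ[R] M →ₗ[R] P) (v : Fin 2 → M) :
    mlin2 f v = f (v 0) (v 1) := rfl

theorem fin2_cases (k : Fin 2) : k = 0 ∨ k = 1 := by omega

/-- Lift of a symmetric bilinear map to the second symmetric power. -/
noncomputable def SymPow.lift₂ (f : M →ₗ[R] M →ₗ[R] P) (hf : ∀ a b, f a b = f b a) :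
    SymPow R 2 M →ₗ[R] P :=
  SymPow.lift (mlin2 f) (by
    intro σ v
    rcases fin2_cases (σ 0) with h0 | h0
    · have h1 : σ 1 = 1 := by
        rcases fin2_cases (σ 1) with h | h
        · exact absurd (σ.injective (h0.trans h.symm)) (by decide)
        · exact h
      show f (v (σ 0)) (v (σ 1)) = f (v 0) (v 1)
      rw [h0, h1]
    · have h1 : σ 1 = 0 := by
        rcases fin2_cases (σ 1) with h | h
        · exact h
        · exact absurd (σ.injective (h0.trans h.symm)) (by decide)
      show f (v (σ 0)) (v (σ 1)) = f (v 0) (v 1)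
      rw [h0, h1, hf])

@[simp] theorem SymPow.lift₂_prod (f : M →ₗ[R] M →ₗ[R] P) (hf : ∀ a b, f a b = f b a)
    (v : Fin 2 → M) : SymPow.lift₂ f hf (SymPow.prod R v) = f (v 0) (v 1) :=
  SymPow.lift_prod _ _ v

theorem prod2_add_left (x x' y : M) :
    SymPow.prod R ![x + x', y] = SymPow.prod R ![x, y] + SymPow.prod R ![x', y] := by
  have h : (![x + x', y] : Fin 2 → M) = Function.update ![x, y] 0 (x + x') := by
    funext i; fin_cases i <;> simp
  have hx : (![x, y] : Fin 2 → M) = Function.update ![x, y] 0 x := by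
    funext i; fin_cases i <;> simp
  have hx' : (![x', y] : Fin 2 → M) = Function.update ![x, y] 0 x' := by
    funext i; fin_cases i <;> simp
  unfold SymPow.prod
  rw [h, MultilinearMap.map_update_add, map_add, ← hx, ← hx']

theorem prod2_smul_left (c : R) (x y : M) :
    SymPow.prod R ![c • x, y] = c • SymPow.prod R ![x, y] := by
  have h : (![c • x, y] : Fin 2 → M) = Function.update ![x, y] 0 (c • x) := by
    funext i; fin_cases i <;> simp
  have hx : (![x, y] : Fin 2 → M) = Function.update ![x, y] 0 x := by
    funext i; fin_cases i <;> simp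
  unfold SymPow.prod
  rw [h, MultilinearMap.map_update_smul, map_smul, ← hx]

theorem prod2_add_right (x y y' : M) :
    SymPow.prod R ![x, y + y'] = SymPow.prod R ![x, y] + SymPow.prod R ![x, y'] := by
  have h : (![x, y + y'] : Fin 2 → M) = Function.update ![x, y] 1 (y + y') := by
    funext i; fin_cases i <;> simp
  have hy : (![x, y] : Fin 2 → M) = Function.update ![x, y] 1 y := by
    funext i; fin_cases i <;> simp
  have hy' : (![x, y'] : Fin 2 → M) = Function.update ![x, y] 1 y' := by
    funext i; fin_cases i <;> simp
  unfold SymPow.prod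
  rw [h, MultilinearMap.map_update_add, map_add, ← hy, ← hy']

theorem prod2_smul_right (c : R) (x y : M) :
    SymPow.prod R ![x, c • y] = c • SymPow.prod R ![x, y] := by
  have h : (![x, c • y] : Fin 2 → M) = Function.update ![x, y] 1 (c • y) := by
    funext i; fin_cases i <;> simp
  have hy : (![x, y] : Fin 2 → M) = Function.update ![x, y] 1 y := by
    funext i; fin_cases i <;> simp
  unfold SymPow.prod
  rw [h, MultilinearMap.map_update_smul, map_smul, ← hy]

/-- The symmetric product as a bilinear map. -/
noncomputable def sprod (R : Type*) [CommRing R] {M : Type*} [AddCommGroup M] [Module R M] :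
    M →ₗ[R] M →ₗ[R] SymPow R 2 M :=
  LinearMap.mk₂ R (fun x y => SymPow.prod R ![x, y])
    prod2_add_left prod2_smul_left prod2_add_right prod2_smul_right

@[simp] theorem sprod_apply (x y : M) : sprod R x y = SymPow.prod R ![x, y] := rfl

theorem sprod_comm (x y : M) : sprod R x y = sprod R y x := by
  have h : (![y, x] : Fin 2 → M) = ![x, y] ∘ (Equiv.swap (0:Fin 2) 1) := by
    funext i; fin_cases i <;> simp
  simp only [sprod_apply]
  rw [h, SymPow.prod_comp]

theorem prod_eq_sprod (v : Fin 2 → M) : SymPow.prod R v = sprod R (v 0) (v 1) := by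
  rw [sprod_apply]
  congr 1
  funext i; fin_cases i <;> simp

end Helpers

section Helpers2
variable {R : Type*} [CommRing R] {M : Type*} [AddCommGroup M] [Module R M]
variable {P : Type*} [AddCommGroup P] [Module R P]

theorem SymPow.hom_ext {n : ℕ} {f g : SymPow R n M →ₗ[R] P}
    (h : ∀ v : Fin n → M, f (SymPow.prod R v) = g (SymPow.prod R v)) : f = g := by
  apply Submodule.linearMap_qext
  apply PiTensorProduct.ext
  apply MultilinearMap.ext
  intro v
  exact h v

theorem prod4_add_0 (a b c d a' : M) :
    SymPow.prod R ![a + a', b, c, d] = SymPow.prod R ![a, b, c, d] + SymPow.prod R ![a', b, c, d] := by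
  have h1 : (![a + a', b, c, d] : Fin 4 → M) = Function.update ![a, b, c, d] 0 (a + a') := by
    funext j; fin_cases j <;> simp
  have h2 : (![a, b, c, d] : Fin 4 → M) = Function.update ![a, b, c, d] 0 a := by
    funext j; fin_cases j <;> simp
  have h3 : (![a', b, c, d] : Fin 4 → M) = Function.update ![a, b, c, d] 0 a' := by
    funext j; fin_cases j <;> simp
  unfold SymPow.prod
  rw [h1, MultilinearMap.map_update_add, map_add, ← h2, ← h3]

theorem prod4_smul_0 (r : R) (a b c d : M) :
    SymPow.prod R ![r • a, b, c, d] = r • SymPow.prod R ![a, b, c, d] := by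
  have h1 : (![r • a, b, c, d] : Fin 4 → M) = Function.update ![a, b, c, d] 0 (r • a) := by
    funext j; fin_cases j <;> simp
  have h2 : (![a, b, c, d] : Fin 4 → M) = Function.update ![a, b, c, d] 0 a := by
    funext j; fin_cases j <;> simp
  unfold SymPow.prod
  rw [h1, MultilinearMap.map_update_smul, map_smul, ← h2]

theorem prod4_add_1 (a b c d b' : M) :
    SymPow.prod R ![a, b + b', c, d] = SymPow.prod R ![a, b, c, d] + SymPow.prod R ![a, b', c, d] := by
  have h1 : (![a, b + b', c, d] : Fin 4 → M) = Function.update ![a, b, c, d] 1 (b + b') := by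
    funext j; fin_cases j <;> simp
  have h2 : (![a, b, c, d] : Fin 4 → M) = Function.update ![a, b, c, d] 1 b := by
    funext j; fin_cases j <;> simp
  have h3 : (![a, b', c, d] : Fin 4 → M) = Function.update ![a, b, c, d] 1 b' := by
    funext j; fin_cases j <;> simp
  unfold SymPow.prod
  rw [h1, MultilinearMap.map_update_add, map_add, ← h2, ← h3]

theorem prod4_smul_1 (r : R) (a b c d : M) :
    SymPow.prod R ![a, r • b, c, d] = r • SymPow.prod R ![a, b, c, d] := by
  have h1 : (![a, r • b, c, d] : Fin 4 → M) = Function.update ![a, b, c, d] 1 (r • b) := by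
    funext j; fin_cases j <;> simp
  have h2 : (![a, b, c, d] : Fin 4 → M) = Function.update ![a, b, c, d] 1 b := by
    funext j; fin_cases j <;> simp
  unfold SymPow.prod
  rw [h1, MultilinearMap.map_update_smul, map_smul, ← h2]

theorem prod4_add_2 (a b c d c' : M) :
    SymPow.prod R ![a, b, c + c', d] = SymPow.prod R ![a, b, c, d] + SymPow.prod R ![a, b, c', d] := by
  have h1 : (![a, b, c + c', d] : Fin 4 → M) = Function.update ![a, b, c, d] 2 (c + c') := by
    funext j; fin_cases j <;> simp
  have h2 : (![a, b, c, d] : Fin 4 → M) = Function.update ![a, b, c, d] 2 c := by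
    funext j; fin_cases j <;> simp
  have h3 : (![a, b, c', d] : Fin 4 → M) = Function.update ![a, b, c, d] 2 c' := by
    funext j; fin_cases j <;> simp
  unfold SymPow.prod
  rw [h1, MultilinearMap.map_update_add, map_add, ← h2, ← h3]

theorem prod4_smul_2 (r : R) (a b c d : M) :
    SymPow.prod R ![a, b, r • c, d] = r • SymPow.prod R ![a, b, c, d] := by
  have h1 : (![a, b, r • c, d] : Fin 4 → M) = Function.update ![a, b, c, d] 2 (r • c) := by
    funext j; fin_cases j <;> simp
  have h2 : (![a, b, c, d] : Fin 4 → M) = Function.update ![a, b, c, d] 2 c := by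
    funext j; fin_cases j <;> simp
  unfold SymPow.prod
  rw [h1, MultilinearMap.map_update_smul, map_smul, ← h2]

theorem prod4_add_3 (a b c d d' : M) :
    SymPow.prod R ![a, b, c, d + d'] = SymPow.prod R ![a, b, c, d] + SymPow.prod R ![a, b, c, d'] := by
  have h1 : (![a, b, c, d + d'] : Fin 4 → M) = Function.update ![a, b, c, d] 3 (d + d') := by
    funext j; fin_cases j <;> simp
  have h2 : (![a, b, c, d] : Fin 4 → M) = Function.update ![a, b, c, d] 3 d := by
    funext j; fin_cases j <;> simp
  have h3 : (![a, b, c, d'] : Fin 4 → M) = Function.update ![a, b, c, d] 3 d' := by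
    funext j; fin_cases j <;> simp
  unfold SymPow.prod
  rw [h1, MultilinearMap.map_update_add, map_add, ← h2, ← h3]

theorem prod4_smul_3 (r : R) (a b c d : M) :
    SymPow.prod R ![a, b, c, r • d] = r • SymPow.prod R ![a, b, c, d] := by
  have h1 : (![a, b, c, r • d] : Fin 4 → M) = Function.update ![a, b, c, d] 3 (r • d) := by
    funext j; fin_cases j <;> simp
  have h2 : (![a, b, c, d] : Fin 4 → M) = Function.update ![a, b, c, d] 3 d := by
    funext j; fin_cases j <;> simp
  unfold SymPow.prod
  rw [h1, MultilinearMap.map_update_smul, map_smul, ← h2]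

/-- Specific permutation lemmas for degree-4 products. -/
theorem prod4_swap01 (a b c d : M) :
    SymPow.prod R ![a, b, c, d] = SymPow.prod R ![b, a, c, d] := by
  have h : (![b, a, c, d] : Fin 4 → M) = ![a, b, c, d] ∘ (Equiv.swap (0:Fin 4) 1) := by
    funext i; fin_cases i <;> simp [Equiv.swap_apply_def]
  rw [h, SymPow.prod_comp]

theorem prod4_swap23 (a b c d : M) :
    SymPow.prod R ![a, b, c, d] = SymPow.prod R ![a, b, d, c] := by
  have h : (![a, b, d, c] : Fin 4 → M) = ![a, b, c, d] ∘ (Equiv.swap (2:Fin 4) 3) := by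
    funext i; fin_cases i <;> simp [Equiv.swap_apply_def]
  rw [h, SymPow.prod_comp]

theorem prod4_pairswap (a b c d : M) :
    SymPow.prod R ![a, b, c, d] = SymPow.prod R ![c, d, a, b] := by
  have h : (![c, d, a, b] : Fin 4 → M) = ![a, b, c, d] ∘ ((Equiv.swap (0:Fin 4) 2) * (Equiv.swap (1:Fin 4) 3)) := by
    funext i; fin_cases i <;> simp [Equiv.Perm.mul_apply, Equiv.swap_apply_def]
  rw [h, SymPow.prod_comp]

theorem prod4_cyc (a b c d : M) :
    SymPow.prod R ![a, b, c, d] = SymPow.prod R ![a, d, b, c] := by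
  have h : (![a, d, b, c] : Fin 4 → M) = ![a, b, c, d] ∘ ((Equiv.swap (1:Fin 4) 2) * (Equiv.swap (1:Fin 4) 3)) := by
    funext i; fin_cases i <;> simp [Equiv.Perm.mul_apply, Equiv.swap_apply_def]
  rw [h, SymPow.prod_comp]

theorem prod4_swap12 (a b c d : M) :
    SymPow.prod R ![a, b, c, d] = SymPow.prod R ![a, c, b, d] := by
  have h : (![a, c, b, d] : Fin 4 → M) = ![a, b, c, d] ∘ (Equiv.swap 1 2) := by
    funext i; fin_cases i <;> simp [Equiv.swap_apply_def]
  rw [h, SymPow.prod_comp]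

/-- Multiplication `M × M × Sym²M → Sym⁴M` in the last two slots. -/
noncomputable def inner4 (x y : M) : M →ₗ[R] M →ₗ[R] SymPow R 4 M :=
  LinearMap.mk₂ R (fun z w => SymPow.prod R ![x, y, z, w])
    (fun m₁ m₂ n => prod4_add_2 x y m₁ n m₂) (fun r m n => prod4_smul_2 r x y m n)
    (fun m n₁ n₂ => prod4_add_3 x y m n₁ n₂) (fun r m n => prod4_smul_3 r x y m n)

noncomputable def K4 (x y : M) : SymPow R 2 M →ₗ[R] SymPow R 4 M :=
  SymPow.lift₂ (inner4 x y) (fun z w => by exact prod4_swap23 x y z w)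

theorem K4_prod (x y : M) (v : Fin 2 → M) :
    K4 x y (SymPow.prod R v) = SymPow.prod R ![x, y, v 0, v 1] := by
  exact SymPow.lift₂_prod _ _ v

end Helpers2

section Helpers3
variable {R : Type*} [CommRing R] {M : Type*} [AddCommGroup M] [Module R M]

/-- `K4` as a bilinear map in the first two slots. -/
noncomputable def Kb : M →ₗ[R] M →ₗ[R] (SymPow R 2 M →ₗ[R] SymPow R 4 M) :=
  LinearMap.mk₂ R (fun x y => K4 x y)
    (fun x x' y => SymPow.hom_ext fun v => by
      rw [LinearMap.add_apply, K4_prod, K4_prod, K4_prod, prod4_add_0])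
    (fun r x y => SymPow.hom_ext fun v => by
      rw [LinearMap.smul_apply, K4_prod, K4_prod, prod4_smul_0])
    (fun x y y' => SymPow.hom_ext fun v => by
      rw [LinearMap.add_apply, K4_prod, K4_prod, K4_prod, prod4_add_1])
    (fun r x y => SymPow.hom_ext fun v => by
      rw [LinearMap.smul_apply, K4_prod, K4_prod, prod4_smul_1])

theorem Kb_comm (x y : M) : Kb (R := R) x y = Kb y x := by
  refine SymPow.hom_ext fun v => ?_
  show K4 x y _ = K4 y x _
  rw [K4_prod, K4_prod, prod4_swap01]

/-- The multiplication map `Sym²M →ₗ Sym²M →ₗ Sym⁴M`. -/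
noncomputable def mul22 : SymPow R 2 M →ₗ[R] (SymPow R 2 M →ₗ[R] SymPow R 4 M) :=
  SymPow.lift₂ Kb Kb_comm

theorem mul22_prod_prod (v w : Fin 2 → M) :
    mul22 (SymPow.prod R v) (SymPow.prod R w) = SymPow.prod R ![v 0, v 1, w 0, w 1] := by
  unfold mul22
  rw [SymPow.lift₂_prod]
  show K4 (v 0) (v 1) _ = _
  rw [K4_prod]

theorem mul22_comm (u w : SymPow R 2 M) : mul22 u w = mul22 w u := by
  have h : (mul22 : SymPow R 2 M →ₗ[R] _) = (mul22 (R := R) (M := M)).flip := by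
    refine SymPow.hom_ext fun v => ?_
    refine SymPow.hom_ext fun w => ?_
    rw [LinearMap.flip_apply, mul22_prod_prod, mul22_prod_prod, prod4_pairswap]
  conv_lhs => rw [h]
  rw [LinearMap.flip_apply]

/-- The canonical surjection `q : Sym²(Sym²M) → Sym⁴M`. -/
noncomputable def qmap : SymPow R 2 (SymPow R 2 M) →ₗ[R] SymPow R 4 M :=
  SymPow.lift₂ mul22 mul22_comm

theorem qmap_spec (a c : Fin 2 → M) :
    qmap (SymPow.prod R ![SymPow.prod R a, SymPow.prod R c]) =
      SymPow.prod R ![a 0, a 1, c 0, c 1] := by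
  unfold qmap
  rw [SymPow.lift₂_prod]
  show mul22 (SymPow.prod R a) (SymPow.prod R c) = _
  rw [mul22_prod_prod]

theorem qmap_surjective : Function.Surjective (qmap (R := R) (M := M)) := by
  intro z
  obtain ⟨t, rfl⟩ := (symRel R 4 M).mkQ_surjective z
  have ht : t ∈ Submodule.span R (Set.range (PiTensorProduct.tprod R)) := by
    rw [PiTensorProduct.span_tprod_eq_top]; trivial
  have : (symRel R 4 M).mkQ t ∈ LinearMap.range (qmap (R := R) (M := M)) := by
    refine Submodule.span_induction ?_ ?_ ?_ ?_ ht
    · rintro _ ⟨v, rfl⟩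
      refine ⟨SymPow.prod R ![SymPow.prod R ![v 0, v 1], SymPow.prod R ![v 2, v 3]], ?_⟩
      rw [qmap_spec]
      show SymPow.prod R _ = SymPow.prod R v
      congr 1
      funext i; fin_cases i <;> simp
    · exact ⟨0, map_zero _⟩
    · rintro x y - - ⟨u, hu⟩ ⟨w, hw⟩
      exact ⟨u + w, by rw [map_add, hu, hw]; rfl⟩
    · rintro r x - ⟨u, hu⟩
      exact ⟨r • u, by rw [map_smul, hu]; rfl⟩
  exact this

end Helpers3

section Helpers4
variable {R : Type*} [CommRing R] {M : Type*} [AddCommGroup M] [Module R M]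
variable {P : Type*} [AddCommGroup P] [Module R P]

/-- An alternating map on `Fin 2` from a bilinear map vanishing on the diagonal. -/
def altOfBilin (f : M →ₗ[R] M →ₗ[R] P) (hf : ∀ a, f a a = 0) : M [⋀^Fin 2]→ₗ[R] P :=
  { mlin2 f with
    map_eq_zero_of_eq' := by
      intro v i j hv hij
      rcases fin2_cases i with hi | hi <;> rcases fin2_cases j with hj | hj <;>
        subst hi <;> subst hj
      · exact absurd rfl hij
      · show f (v 0) (v 1) = 0
        rw [← hv, hf]
      · show f (v 0) (v 1) = 0
        rw [hv, hf]
      · exact absurd rfl hij }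

@[simp] theorem altOfBilin_apply (f : M →ₗ[R] M →ₗ[R] P) (hf : ∀ a, f a a = 0)
    (v : Fin 2 → M) : altOfBilin f hf v = f (v 0) (v 1) := rfl

/-- A linear map on the second exterior power from an alternating map. -/
noncomputable def wedgeLift (f : M [⋀^Fin 2]→ₗ[R] P) : (⋀[R]^2 M) →ₗ[R] P :=
  (ExteriorAlgebra.liftAlternating
    (Function.update (0 : ∀ i, M [⋀^Fin i]→ₗ[R] P) 2 f)) ∘ₗ (⋀[R]^2 M).subtype

@[simp] theorem wedgeLift_wedgeMk (f : M [⋀^Fin 2]→ₗ[R] P) (v : Fin 2 → M) :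
    wedgeLift f (wedgeMk R v) = f v := by
  unfold wedgeLift wedgeMk
  rw [LinearMap.comp_apply]
  show ExteriorAlgebra.liftAlternating _ (ExteriorAlgebra.ιMulti R 2 v) = _
  rw [ExteriorAlgebra.liftAlternating_apply_ιMulti, Function.update_self]

theorem wedge_hom_ext {f g : (⋀[R]^2 M) →ₗ[R] P}
    (h : ∀ v : Fin 2 → M, f (wedgeMk R v) = g (wedgeMk R v)) : f = g := by
  apply LinearMap.ext
  rintro ⟨x, hx⟩
  have hx' : x ∈ Submodule.span R (Set.range (ExteriorAlgebra.ιMulti R 2 (M := M))) := by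
    rw [ExteriorAlgebra.ιMulti_span_fixedDegree]; exact hx
  revert hx
  refine Submodule.span_induction (p := fun a _ => ∀ ha : a ∈ ⋀[R]^2 M, f ⟨a, ha⟩ = g ⟨a, ha⟩)
    ?_ ?_ ?_ ?_ hx'
  · rintro _ ⟨v, rfl⟩ ha
    have : (⟨ExteriorAlgebra.ιMulti R 2 v, ha⟩ : ⋀[R]^2 M) = wedgeMk R v := rfl
    rw [this]; exact h v
  · intro ha
    have : (⟨0, ha⟩ : ⋀[R]^2 M) = 0 := rfl
    rw [this, map_zero, map_zero]
  · intro a b ha' hb' pa pb hab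
    have ha : a ∈ ⋀[R]^2 M := by
      rw [← ExteriorAlgebra.ιMulti_span_fixedDegree]; exact ha'
    have hb : b ∈ ⋀[R]^2 M := by
      rw [← ExteriorAlgebra.ιMulti_span_fixedDegree]; exact hb'
    have : (⟨a + b, hab⟩ : ⋀[R]^2 M) = ⟨a, ha⟩ + ⟨b, hb⟩ := rfl
    rw [this, map_add, map_add, pa ha, pb hb]
  · intro r a ha' pa hra
    have ha : a ∈ ⋀[R]^2 M := by
      rw [← ExteriorAlgebra.ιMulti_span_fixedDegree]; exact ha'
    have : (⟨r • a, hra⟩ : ⋀[R]^2 M) = r • ⟨a, ha⟩ := rfl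
    rw [this, map_smul, map_smul, pa ha]

end Helpers4

section Helpers5
variable {R : Type*} [CommRing R] {M : Type*} [AddCommGroup M] [Module R M]

/-- The quadrilinear map `(x,y,z,w) ↦ (x·z)·(y·w) − (x·w)·(z·y)` into `Sym²(Sym²M)`,
bilinear in the last two slots. -/
noncomputable def Fin2map (x y : M) : M →ₗ[R] M →ₗ[R] SymPow R 2 (SymPow R 2 M) :=
  LinearMap.mk₂ R
    (fun z w => sprod R (sprod R x z) (sprod R y w) - sprod R (sprod R x w) (sprod R z y))
    (fun z z' w => by
      simp only [map_add, LinearMap.add_apply]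
      abel)
    (fun r z w => by
      simp only [map_smul, LinearMap.smul_apply, smul_sub])
    (fun z w w' => by
      simp only [map_add, LinearMap.add_apply]
      abel)
    (fun r z w => by
      simp only [map_smul, LinearMap.smul_apply, smul_sub])

@[simp] theorem Fin2map_apply (x y z w : M) :
    Fin2map x y z w =
      sprod R (sprod R x z) (sprod R y w) - sprod R (sprod R x w) (sprod R z y) := rfl

theorem Fin2map_diag (x y z : M) : Fin2map (R := R) x y z z = 0 := by
  rw [Fin2map_apply, sprod_comm z y, sub_self]

/-- `Fin2map` lifted to the exterior power in the last two slots. -/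
noncomputable def Lhalf (x y : M) : (⋀[R]^2 M) →ₗ[R] SymPow R 2 (SymPow R 2 M) :=
  wedgeLift (altOfBilin (Fin2map x y) (Fin2map_diag x y))

theorem Lhalf_wedgeMk (x y : M) (v : Fin 2 → M) :
    Lhalf x y (wedgeMk R v) = Fin2map x y (v 0) (v 1) := by
  rw [Lhalf, wedgeLift_wedgeMk, altOfBilin_apply]

/-- `Lhalf` as a bilinear map. -/
noncomputable def Lb : M →ₗ[R] M →ₗ[R] ((⋀[R]^2 M) →ₗ[R] SymPow R 2 (SymPow R 2 M)) :=
  LinearMap.mk₂ R (fun x y => Lhalf x y)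
    (fun x x' y => wedge_hom_ext fun v => by
      rw [LinearMap.add_apply, Lhalf_wedgeMk, Lhalf_wedgeMk, Lhalf_wedgeMk]
      simp only [Fin2map_apply, map_add, LinearMap.add_apply]
      abel)
    (fun r x y => wedge_hom_ext fun v => by
      rw [LinearMap.smul_apply, Lhalf_wedgeMk, Lhalf_wedgeMk]
      simp only [Fin2map_apply, map_smul, LinearMap.smul_apply, smul_sub])
    (fun x y y' => wedge_hom_ext fun v => by
      rw [LinearMap.add_apply, Lhalf_wedgeMk, Lhalf_wedgeMk, Lhalf_wedgeMk]
      simp only [Fin2map_apply, map_add, LinearMap.add_apply]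
      abel)
    (fun r x y => wedge_hom_ext fun v => by
      rw [LinearMap.smul_apply, Lhalf_wedgeMk, Lhalf_wedgeMk]
      simp only [Fin2map_apply, map_smul, LinearMap.smul_apply, smul_sub])

theorem Lb_diag (x : M) : Lb (R := R) x x = 0 := by
  refine wedge_hom_ext fun v => ?_
  show Lhalf x x (wedgeMk R v) = (0 : _ →ₗ[R] _) (wedgeMk R v)
  rw [Lhalf_wedgeMk, LinearMap.zero_apply, Fin2map_apply, sprod_comm (v 0) x,
    sprod_comm (sprod R x (v 1)) (sprod R x (v 0))]
  exact sub_self _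

/-- The full map `⋀²M →ₗ ⋀²M →ₗ Sym²(Sym²M)`. -/
noncomputable def Lfull : (⋀[R]^2 M) →ₗ[R] (⋀[R]^2 M) →ₗ[R] SymPow R 2 (SymPow R 2 M) :=
  wedgeLift (altOfBilin Lb Lb_diag)

theorem Lfull_wedgeMk (v w : Fin 2 → M) :
    Lfull (wedgeMk R v) (wedgeMk R w) = Fin2map (v 0) (v 1) (w 0) (w 1) := by
  rw [Lfull, wedgeLift_wedgeMk, altOfBilin_apply]
  exact Lhalf_wedgeMk _ _ _

theorem Lfull_comm (ω η : ⋀[R]^2 M) : Lfull ω η = Lfull η ω := by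
  have h : (Lfull : (⋀[R]^2 M) →ₗ[R] _) = (Lfull (R := R) (M := M)).flip := by
    refine wedge_hom_ext fun v => ?_
    refine wedge_hom_ext fun w => ?_
    rw [LinearMap.flip_apply, Lfull_wedgeMk, Lfull_wedgeMk, Fin2map_apply, Fin2map_apply,
      sprod_comm (w 0) (v 0), sprod_comm (w 1) (v 1),
      sprod_comm (sprod R (w 0) (v 1)) (sprod R (v 0) (w 1))]
  conv_lhs => rw [h]
  rw [LinearMap.flip_apply]

/-- The inclusion `i : Sym²(⋀²M) → Sym²(Sym²M)`. -/
noncomputable def imap : SymPow R 2 (⋀[R]^2 M) →ₗ[R] SymPow R 2 (SymPow R 2 M) :=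
  SymPow.lift₂ Lfull Lfull_comm

theorem imap_prod (ω η : ⋀[R]^2 M) :
    imap (SymPow.prod R ![ω, η]) = Lfull ω η := by
  unfold imap
  rw [SymPow.lift₂_prod]
  simp

theorem imap_spec (b : Module.Basis (Fin 2) R M) :
    imap (SymPow.prod R ![wedgeMk R ![b 0, b 1], wedgeMk R ![b 0, b 1]]) =
      SymPow.prod R ![SymPow.prod R ![b 0, b 0], SymPow.prod R ![b 1, b 1]]
      - SymPow.prod R ![SymPow.prod R ![b 0, b 1], SymPow.prod R ![b 0, b 1]] := by
  rw [imap_prod, Lfull_wedgeMk]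
  show Fin2map (b 0) (b 1) (b 0) (b 1) = _
  rw [Fin2map_apply]
  rfl

end Helpers5

section Helpers6
variable {R : Type*} [CommRing R] {M : Type*} [AddCommGroup M] [Module R M]
variable {P : Type*} [AddCommGroup P] [Module R P]

theorem sym2_hom_ext {S : Set M} (hS : Submodule.span R S = ⊤)
    {f g : SymPow R 2 M →ₗ[R] P}
    (h : ∀ a ∈ S, ∀ b ∈ S, f (sprod R a b) = g (sprod R a b)) : f = g := by
  have key : ∀ u ∈ Submodule.span R S, ∀ w ∈ Submodule.span R S,
      f (sprod R u w) = g (sprod R u w) := by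
    intro u hu
    refine Submodule.span_induction ?_ ?_ ?_ ?_ hu
    · intro a ha w hw
      refine Submodule.span_induction ?_ ?_ ?_ ?_ hw
      · intro b hb; exact h a ha b hb
      · rw [map_zero, map_zero, map_zero]
      · intro b c _ _ hb hc
        rw [map_add, map_add, map_add, hb, hc]
      · intro r b _ hb
        rw [map_smul, map_smul, map_smul, hb]
    · intro w hw
      rw [map_zero, LinearMap.zero_apply, map_zero, map_zero]
    · intro u₁ u₂ _ _ h1 h2 w hw
      rw [map_add, LinearMap.add_apply, map_add, map_add, h1 w hw, h2 w hw]
    · intro r u₁ _ h1 w hw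
      rw [map_smul, LinearMap.smul_apply, map_smul, map_smul, h1 w hw]
  refine SymPow.hom_ext fun v => ?_
  rw [prod_eq_sprod]
  exact key (v 0) (by rw [hS]; trivial) (v 1) (by rw [hS]; trivial)

/-- Expansion lemmas for wedges. -/
theorem wedge_add_left (x x' y : M) :
    wedgeMk R ![x + x', y] = wedgeMk R ![x, y] + wedgeMk R ![x', y] := by
  apply Subtype.ext
  show ExteriorAlgebra.ιMulti R 2 ![x + x', y] = _
  have h : (![x + x', y] : Fin 2 → M) = Function.update ![x, y] 0 (x + x') := by
    funext i; fin_cases i <;> simp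
  have hx : (![x, y] : Fin 2 → M) = Function.update ![x, y] 0 x := by
    funext i; fin_cases i <;> simp
  have hx' : (![x', y] : Fin 2 → M) = Function.update ![x, y] 0 x' := by
    funext i; fin_cases i <;> simp
  rw [h]
  rw [AlternatingMap.map_update_add]
  rw [← hx, ← hx']
  rfl

theorem wedge_smul_left (c : R) (x y : M) :
    wedgeMk R ![c • x, y] = c • wedgeMk R ![x, y] := by
  apply Subtype.ext
  show ExteriorAlgebra.ιMulti R 2 ![c • x, y] = _
  have h : (![c • x, y] : Fin 2 → M) = Function.update ![x, y] 0 (c • x) := by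
    funext i; fin_cases i <;> simp
  have hx : (![x, y] : Fin 2 → M) = Function.update ![x, y] 0 x := by
    funext i; fin_cases i <;> simp
  rw [h, AlternatingMap.map_update_smul, ← hx]
  rfl

theorem wedge_add_right (x y y' : M) :
    wedgeMk R ![x, y + y'] = wedgeMk R ![x, y] + wedgeMk R ![x, y'] := by
  apply Subtype.ext
  show ExteriorAlgebra.ιMulti R 2 ![x, y + y'] = _
  have h : (![x, y + y'] : Fin 2 → M) = Function.update ![x, y] 1 (y + y') := by
    funext i; fin_cases i <;> simp
  have hy : (![x, y] : Fin 2 → M) = Function.update ![x, y] 1 y := by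
    funext i; fin_cases i <;> simp
  have hy' : (![x, y'] : Fin 2 → M) = Function.update ![x, y] 1 y' := by
    funext i; fin_cases i <;> simp
  rw [h, AlternatingMap.map_update_add, ← hy, ← hy']
  rfl

theorem wedge_smul_right (c : R) (x y : M) :
    wedgeMk R ![x, c • y] = c • wedgeMk R ![x, y] := by
  apply Subtype.ext
  show ExteriorAlgebra.ιMulti R 2 ![x, c • y] = _
  have h : (![x, c • y] : Fin 2 → M) = Function.update ![x, y] 1 (c • y) := by
    funext i; fin_cases i <;> simp
  have hy : (![x, y] : Fin 2 → M) = Function.update ![x, y] 1 y := by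
    funext i; fin_cases i <;> simp
  rw [h, AlternatingMap.map_update_smul, ← hy]
  rfl

theorem wedge_diag (x : M) : wedgeMk R ![x, x] = 0 := by
  apply Subtype.ext
  show ExteriorAlgebra.ιMulti R 2 ![x, x] = 0
  exact AlternatingMap.map_eq_zero_of_eq _ _ (by simp : (![x,x] : Fin 2 → M) 0 = ![x,x] 1)
    (by decide)

theorem wedge_swap (x y : M) : wedgeMk R ![y, x] = - wedgeMk R ![x, y] := by
  apply Subtype.ext
  show ExteriorAlgebra.ιMulti R 2 ![y, x] = -(ExteriorAlgebra.ιMulti R 2 ![x, y])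
  have h : (![y, x] : Fin 2 → M) = ![x, y] ∘ (Equiv.swap (0 : Fin 2) 1) := by
    funext i; fin_cases i <;> simp
  rw [h]
  exact (ExteriorAlgebra.ιMulti R 2).map_swap ![x,y] (by decide)

theorem wedge_expand (b₀ : Module.Basis (Fin 2) R M) (v : Fin 2 → M) :
    wedgeMk R v = (b₀.repr (v 0) 0 * b₀.repr (v 1) 1 - b₀.repr (v 0) 1 * b₀.repr (v 1) 0) •
      wedgeMk R ![b₀ 0, b₀ 1] := by
  have hv : v = ![v 0, v 1] := by funext i; fin_cases i <;> simp
  have h0 : v 0 = b₀.repr (v 0) 0 • b₀ 0 + b₀.repr (v 0) 1 • b₀ 1 := by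
    conv_lhs => rw [← Module.Basis.sum_repr b₀ (v 0)]
    rw [Fin.sum_univ_two]
  have h1 : v 1 = b₀.repr (v 1) 0 • b₀ 0 + b₀.repr (v 1) 1 • b₀ 1 := by
    conv_lhs => rw [← Module.Basis.sum_repr b₀ (v 1)]
    rw [Fin.sum_univ_two]
  rw [hv]
  conv_lhs => rw [h0, h1]
  rw [wedge_add_left, wedge_smul_left, wedge_smul_left, wedge_add_right, wedge_add_right,
    wedge_smul_right, wedge_smul_right, wedge_smul_right, wedge_smul_right,
    wedge_diag, wedge_diag, wedge_swap (b₀ 0) (b₀ 1)]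
  simp only [Matrix.cons_val_zero, Matrix.cons_val_one, Matrix.head_cons]
  module

theorem wedge_span (b₀ : Module.Basis (Fin 2) R M) :
    Submodule.span R {(wedgeMk R ![b₀ 0, b₀ 1] : ⋀[R]^2 M)} = ⊤ := by
  rw [eq_top_iff]
  rintro ⟨z, hz⟩ -
  have hz' : z ∈ Submodule.span R (Set.range (ExteriorAlgebra.ιMulti R 2 (M := M))) := by
    rw [ExteriorAlgebra.ιMulti_span_fixedDegree]; exact hz
  revert hz
  refine Submodule.span_induction
    (p := fun a _ => ∀ ha : a ∈ ⋀[R]^2 M,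
      (⟨a, ha⟩ : ⋀[R]^2 M) ∈ Submodule.span R {(wedgeMk R ![b₀ 0, b₀ 1] : ⋀[R]^2 M)})
    ?_ ?_ ?_ ?_ hz'
  · rintro _ ⟨v, rfl⟩ ha
    have : (⟨ExteriorAlgebra.ιMulti R 2 v, ha⟩ : ⋀[R]^2 M) = wedgeMk R v := rfl
    rw [this, wedge_expand b₀ v]
    exact Submodule.smul_mem _ _ (Submodule.subset_span rfl)
  · intro ha
    have : (⟨0, ha⟩ : ⋀[R]^2 M) = 0 := rfl
    rw [this]; exact Submodule.zero_mem _
  · intro a b ha' hb' pa pb hab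
    have ha : a ∈ ⋀[R]^2 M := by
      rw [← ExteriorAlgebra.ιMulti_span_fixedDegree]; exact ha'
    have hb : b ∈ ⋀[R]^2 M := by
      rw [← ExteriorAlgebra.ιMulti_span_fixedDegree]; exact hb'
    have : (⟨a + b, hab⟩ : ⋀[R]^2 M) = ⟨a, ha⟩ + ⟨b, hb⟩ := rfl
    rw [this]; exact Submodule.add_mem _ (pa ha) (pb hb)
  · intro r a ha' pa hra
    have ha : a ∈ ⋀[R]^2 M := by
      rw [← ExteriorAlgebra.ιMulti_span_fixedDegree]; exact ha'
    have : (⟨r • a, hra⟩ : ⋀[R]^2 M) = r • ⟨a, ha⟩ := rfl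
    rw [this]; exact Submodule.smul_mem _ _ (pa ha)

end Helpers6

section Helpers7
variable {R : Type*} [CommRing R] {M : Type*} [AddCommGroup M] [Module R M]
variable (b₀ : Module.Basis (Fin 2) R M)

/-- The middle coefficient functional on `Sym²M`. -/
noncomputable def c11 : SymPow R 2 M →ₗ[R] R :=
  SymPow.lift₂
    (LinearMap.mk₂ R (fun a b => b₀.coord 0 a * b₀.coord 1 b + b₀.coord 1 a * b₀.coord 0 b)
      (fun a a' b => by simp only [map_add]; ring)
      (fun r a b => by simp only [map_smul, smul_eq_mul]; ring)
      (fun a b b' => by simp only [map_add]; ring)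
      (fun r a b => by simp only [map_smul, smul_eq_mul]; ring))
    (fun a b => by show _ = _; simp only [LinearMap.mk₂_apply]; ring)

theorem c11_sprod (a b : M) :
    c11 b₀ (sprod R a b) = b₀.coord 0 a * b₀.coord 1 b + b₀.coord 1 a * b₀.coord 0 b := by
  unfold c11
  rw [sprod_apply, SymPow.lift₂_prod]
  simp

@[simp] theorem coord_self (i j : Fin 2) : b₀.coord i (b₀ j) = if j = i then 1 else 0 := by
  rw [Module.Basis.coord_apply, Module.Basis.repr_self, Finsupp.single_apply]

/-- The generator of `Sym²(⋀²M)`. -/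
noncomputable def Egen : SymPow R 2 (⋀[R]^2 M) :=
  sprod R (wedgeMk R ![b₀ 0, b₀ 1]) (wedgeMk R ![b₀ 0, b₀ 1])

/-- The retraction `π : Sym²(Sym²M) → Sym²(⋀²M)`. -/
noncomputable def pimap : SymPow R 2 (SymPow R 2 M) →ₗ[R] SymPow R 2 (⋀[R]^2 M) :=
  SymPow.lift₂
    (LinearMap.mk₂ R (fun u v => (-(c11 b₀ u * c11 b₀ v)) • Egen b₀)
      (fun u u' v => by
        simp only [map_add]
        rw [add_mul, neg_add, add_smul])
      (fun r u v => by
        simp only [map_smul, smul_eq_mul, smul_smul]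
        congr 1
        ring)
      (fun u v v' => by
        simp only [map_add]
        rw [mul_add, neg_add, add_smul])
      (fun r u v => by
        simp only [map_smul, smul_eq_mul, smul_smul]
        congr 1
        ring))
    (fun u v => by
      show _ = _
      simp only [LinearMap.mk₂_apply]
      rw [mul_comm])

theorem pimap_sprod (u v : SymPow R 2 M) :
    pimap b₀ (sprod R u v) = (-(c11 b₀ u * c11 b₀ v)) • Egen b₀ := by
  unfold pimap
  rw [sprod_apply, SymPow.lift₂_prod]
  simp

theorem c11_basis (i j : Fin 2) :
    c11 b₀ (sprod R (b₀ i) (b₀ j)) = if i = j then 0 else 1 := by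
  rw [c11_sprod]
  fin_cases i <;> fin_cases j <;> simp

theorem imap_Egen :
    imap (Egen b₀) =
      sprod R (sprod R (b₀ 0) (b₀ 0)) (sprod R (b₀ 1) (b₀ 1))
      - sprod R (sprod R (b₀ 0) (b₀ 1)) (sprod R (b₀ 0) (b₀ 1)) := by
  unfold Egen
  rw [sprod_apply, imap_spec b₀]
  rfl

theorem pi_imap_id : (pimap b₀) ∘ₗ imap = LinearMap.id := by
  refine sym2_hom_ext (S := {(wedgeMk R ![b₀ 0, b₀ 1] : ⋀[R]^2 M)}) (wedge_span b₀) ?_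
  rintro a rfl b rfl
  rw [LinearMap.comp_apply, LinearMap.id_apply]
  show pimap b₀ (imap (Egen b₀)) = Egen b₀
  rw [imap_Egen, map_sub, pimap_sprod, pimap_sprod]
  simp only [c11_basis]
  norm_num

theorem qmap_sprod (u v : SymPow R 2 M) : qmap (sprod R u v) = mul22 u v := by
  unfold qmap
  rw [sprod_apply, SymPow.lift₂_prod]
  simp

theorem q_imap_zero : qmap ∘ₗ imap (R := R) (M := M) = 0 := by
  refine sym2_hom_ext (S := Set.univ) (by simp) ?_
  intro a _ b _
  rw [LinearMap.comp_apply, LinearMap.zero_apply]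
  rw [sprod_apply, imap_prod]
  have key : ∀ v w : Fin 2 → M, qmap (Lfull (wedgeMk R v) (wedgeMk R w)) = 0 := by
    intro v w
    rw [Lfull_wedgeMk, Fin2map_apply, map_sub, qmap_sprod, qmap_sprod, sprod_apply,
      sprod_apply, sprod_apply, sprod_apply, mul22_prod_prod, mul22_prod_prod]
    simp only [Matrix.cons_val_zero, Matrix.cons_val_one, Matrix.head_cons]
    rw [prod4_cyc]
    exact sub_self _
  have hz : (Lfull (R := R) (M := M)).compr₂ qmap = 0 := by
    refine wedge_hom_ext fun v => ?_
    refine wedge_hom_ext fun w => ?_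
    rw [LinearMap.compr₂_apply, LinearMap.zero_apply, LinearMap.zero_apply]
    exact key v w
  have h2 := LinearMap.congr_fun (LinearMap.congr_fun hz a) b
  rw [LinearMap.compr₂_apply] at h2
  simpa using h2

end Helpers7

section Helpers8
variable {R : Type*} [CommRing R] {M : Type*} [AddCommGroup M] [Module R M]
variable (b₀ : Module.Basis (Fin 2) R M)

/-- Number of `1`s in a pattern. -/
def cnt (g : Fin 4 → Fin 2) : ℕ := ∑ i, (g i : ℕ)

/-- Chosen preimages in `Sym²(Sym²M)` of the monomials of `Sym⁴M`. -/
noncomputable def tgt (k : ℕ) : SymPow R 2 (SymPow R 2 M) :=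
  match k with
  | 0 => sprod R (sprod R (b₀ 0) (b₀ 0)) (sprod R (b₀ 0) (b₀ 0))
  | 1 => sprod R (sprod R (b₀ 0) (b₀ 0)) (sprod R (b₀ 0) (b₀ 1))
  | 2 => sprod R (sprod R (b₀ 0) (b₀ 0)) (sprod R (b₀ 1) (b₀ 1))
  | 3 => sprod R (sprod R (b₀ 0) (b₀ 1)) (sprod R (b₀ 1) (b₀ 1))
  | _ => sprod R (sprod R (b₀ 1) (b₀ 1)) (sprod R (b₀ 1) (b₀ 1))

/-- The symmetric multilinear map underlying the section `s : Sym⁴M → Sym²(Sym²M)`. -/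
noncomputable def Smap : MultilinearMap R (fun _ : Fin 4 => M) (SymPow R 2 (SymPow R 2 M)) :=
  ∑ g : Fin 4 → Fin 2,
    (LinearMap.toSpanSingleton R _ (tgt b₀ (cnt g))).compMultilinearMap
      ((MultilinearMap.mkPiAlgebra R (Fin 4) R).compLinearMap (fun i => b₀.coord (g i)))

theorem Smap_apply (v : Fin 4 → M) :
    Smap b₀ v = ∑ g : Fin 4 → Fin 2, (∏ i, b₀.coord (g i) (v i)) • tgt b₀ (cnt g) := by
  rw [Smap, MultilinearMap.sum_apply]
  refine Finset.sum_congr rfl fun g _ => ?_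
  rw [LinearMap.compMultilinearMap_apply, MultilinearMap.compLinearMap_apply,
    MultilinearMap.mkPiAlgebra_apply, LinearMap.toSpanSingleton_apply]

theorem Smap_perm (σ : Equiv.Perm (Fin 4)) (v : Fin 4 → M) :
    Smap b₀ (v ∘ σ) = Smap b₀ v := by
  rw [Smap_apply, Smap_apply]
  refine Fintype.sum_bijective (fun g : Fin 4 → Fin 2 => g ∘ ⇑σ.symm)
    (Equiv.arrowCongr σ (Equiv.refl (Fin 2))).bijective _ _ ?_
  intro g
  have h1 : ∏ i, b₀.coord (g i) ((v ∘ ⇑σ) i) = ∏ i, b₀.coord ((g ∘ ⇑σ.symm) i) (v i) := by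
    rw [← Equiv.prod_comp σ (fun j => b₀.coord ((g ∘ ⇑σ.symm) j) (v j))]
    refine Finset.prod_congr rfl fun i _ => ?_
    simp
  have h2 : cnt (g ∘ ⇑σ.symm) = cnt g := by
    unfold cnt
    exact Equiv.sum_comp σ.symm (fun i => ((g i : ℕ)))
  rw [h1, h2]

theorem Smap_basis (h : Fin 4 → Fin 2) :
    Smap b₀ (fun i => b₀ (h i)) = tgt b₀ (cnt h) := by
  rw [Smap_apply]
  rw [Finset.sum_eq_single h]
  · have : ∏ i, b₀.coord (h i) (b₀ (h i)) = 1 := by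
      refine Finset.prod_eq_one fun i _ => ?_
      simp
    rw [this, one_smul]
  · intro g _ hg
    obtain ⟨i, hi⟩ := Function.ne_iff.mp hg
    have : b₀.coord (g i) (b₀ (h i)) = 0 := by
      rw [coord_self]
      simp [hi]
      exact fun hc => (hi hc.symm).elim
    rw [Finset.prod_eq_zero (Finset.mem_univ i) this, zero_smul]
  · intro hh
    exact absurd (Finset.mem_univ h) hh

/-- The section `s : Sym⁴M → Sym²(Sym²M)`. -/
noncomputable def smap : SymPow R 4 M →ₗ[R] SymPow R 2 (SymPow R 2 M) :=
  SymPow.lift (Smap b₀) (Smap_perm b₀)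

theorem smap_prod (v : Fin 4 → M) : smap b₀ (SymPow.prod R v) = Smap b₀ v :=
  SymPow.lift_prod _ _ v

end Helpers8

section Helpers9
variable {R : Type*} [CommRing R] {M : Type*} [AddCommGroup M] [Module R M]

theorem sym2_span {S : Set M} (hS : Submodule.span R S = ⊤) :
    Submodule.span R {z : SymPow R 2 M | ∃ a ∈ S, ∃ b ∈ S, z = sprod R a b} = ⊤ := by
  set T := {z : SymPow R 2 M | ∃ a ∈ S, ∃ b ∈ S, z = sprod R a b}
  have key : ∀ u, ∀ w, sprod R u w ∈ Submodule.span R T := by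
    have key' : ∀ u ∈ Submodule.span R S, ∀ w ∈ Submodule.span R S,
        sprod R u w ∈ Submodule.span R T := by
      intro u hu
      refine Submodule.span_induction ?_ ?_ ?_ ?_ hu
      · intro a ha w hw
        refine Submodule.span_induction ?_ ?_ ?_ ?_ hw
        · intro b hb
          exact Submodule.subset_span ⟨a, ha, b, hb, rfl⟩
        · rw [map_zero]; exact Submodule.zero_mem _
        · intro b c _ _ hb hc
          rw [map_add]; exact Submodule.add_mem _ hb hc
        · intro r b _ hb
          rw [map_smul]; exact Submodule.smul_mem _ _ hb
      · intro w hw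
        rw [map_zero, LinearMap.zero_apply]; exact Submodule.zero_mem _
      · intro u₁ u₂ _ _ h1 h2 w hw
        rw [map_add, LinearMap.add_apply]; exact Submodule.add_mem _ (h1 w hw) (h2 w hw)
      · intro r u₁ _ h1 w hw
        rw [map_smul, LinearMap.smul_apply]; exact Submodule.smul_mem _ _ (h1 w hw)
    intro u w
    exact key' u (by rw [hS]; trivial) w (by rw [hS]; trivial)
  rw [eq_top_iff]
  rintro z -
  obtain ⟨t, rfl⟩ := (symRel R 2 M).mkQ_surjective z
  have ht : t ∈ Submodule.span R (Set.range (PiTensorProduct.tprod R)) := by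
    rw [PiTensorProduct.span_tprod_eq_top]; trivial
  refine Submodule.span_induction ?_ ?_ ?_ ?_ ht
  · rintro _ ⟨v, rfl⟩
    have : (symRel R 2 M).mkQ (PiTensorProduct.tprod R v) = sprod R (v 0) (v 1) := by
      rw [← prod_eq_sprod]; rfl
    rw [this]; exact key _ _
  · rw [map_zero]; exact Submodule.zero_mem _
  · intro a b _ _ ha hb
    rw [map_add]; exact Submodule.add_mem _ ha hb
  · intro r a _ ha
    rw [map_smul]; exact Submodule.smul_mem _ _ ha

variable (b₀ : Module.Basis (Fin 2) R M)

theorem prod2_comm (a b : M) : SymPow.prod R ![a, b] = SymPow.prod R ![b, a] := by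
  rw [← sprod_apply, ← sprod_apply, sprod_comm]

variable (b₀' : Module.Basis (Fin 2) R M)

theorem smap_mul22 (i j k l : Fin 2) :
    smap b₀ (mul22 (sprod R (b₀ i) (b₀ j)) (sprod R (b₀ k) (b₀ l))) =
      tgt b₀ (cnt ![i, j, k, l]) := by
  rw [sprod_apply, sprod_apply, mul22_prod_prod]
  simp only [Matrix.cons_val_zero, Matrix.cons_val_one, Matrix.head_cons]
  have hv : (![b₀ i, b₀ j, b₀ k, b₀ l] : Fin 4 → M) = fun t => b₀ (![i, j, k, l] t) := by
    funext t; fin_cases t <;> simp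
  rw [hv, smap_prod, Smap_basis]

theorem main_identity :
    imap ∘ₗ pimap b₀ + smap b₀ ∘ₗ qmap = LinearMap.id := by
  refine sym2_hom_ext (sym2_span (S := Set.range b₀) b₀.span_eq) ?_
  rintro _ ⟨a, ⟨i, rfl⟩, b, ⟨j, rfl⟩, rfl⟩ _ ⟨c, ⟨k, rfl⟩, d, ⟨l, rfl⟩, rfl⟩
  rw [LinearMap.add_apply, LinearMap.comp_apply, LinearMap.comp_apply, LinearMap.id_apply,
    pimap_sprod, map_smul, imap_Egen, qmap_sprod, smap_mul22, c11_basis, c11_basis]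
  fin_cases i <;> fin_cases j <;> fin_cases k <;> fin_cases l
  all_goals try simp only [cnt, Fin.sum_univ_four, Matrix.cons_val]
  all_goals norm_num [cnt, Fin.sum_univ_four, tgt]
  all_goals try simp only [prod2_comm (b₀ 1) (b₀ 0)]
  all_goals first
    | rfl
    | exact prod2_comm _ _


end Helpers9

theorem stmt14 {R M : Type*} [CommRing R] [AddCommGroup M] [Module R M]
    (b₀ : Module.Basis (Fin 2) R M) :
    ∃ (i : SymPow R 2 (⋀[R]^2 M) →ₗ[R] SymPow R 2 (SymPow R 2 M))
      (q : SymPow R 2 (SymPow R 2 M) →ₗ[R] SymPow R 4 M),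
      (∀ b : Module.Basis (Fin 2) R M,
        i (SymPow.prod R ![wedgeMk R ![b 0, b 1], wedgeMk R ![b 0, b 1]]) =
          SymPow.prod R ![SymPow.prod R ![b 0, b 0], SymPow.prod R ![b 1, b 1]]
          - SymPow.prod R ![SymPow.prod R ![b 0, b 1], SymPow.prod R ![b 0, b 1]]) ∧
      (∀ a c : Fin 2 → M,
        q (SymPow.prod R ![SymPow.prod R a, SymPow.prod R c]) =
          SymPow.prod R ![a 0, a 1, c 0, c 1]) ∧
      Function.Injective i ∧ Function.Surjective q ∧
      LinearMap.range i = LinearMap.ker q := by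
  refine ⟨imap, qmap, imap_spec, qmap_spec, ?_, qmap_surjective, ?_⟩
  · have hli : Function.LeftInverse (pimap b₀) imap := fun z =>
      LinearMap.congr_fun (pi_imap_id b₀) z
    exact hli.injective
  · apply le_antisymm
    · rintro _ ⟨w, rfl⟩
      rw [LinearMap.mem_ker]
      exact LinearMap.congr_fun (q_imap_zero (R := R) (M := M)) w
    · intro z hz
      rw [LinearMap.mem_ker] at hz
      have h := LinearMap.congr_fun (main_identity b₀) z
      rw [LinearMap.add_apply, LinearMap.comp_apply, LinearMap.comp_apply,
        LinearMap.id_apply, hz, map_zero, add_zero] at h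
      exact ⟨pimap b₀ z, h⟩
end
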